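/- arXiv:2605.09809 — 4 statements merged into one kernel-verified Lean document; each statement's English description precedes it below -/
import Mathlib

section
/- Let d ≥ 1 and r ≥ 1 be integers, let (M_k)_{k≥1} be a sequence of integers with M_k ≥ 2, and set 𝔐_0 = 1 and 𝔐_k = M_1·M_2·⋯·M_k. For each k let D_k = {0, 1, …, r(M_k − 1)}^d ⊆ ℤ^d. Then for every n ≥ 0 and every a ∈ ℤ^d, the number of tuples (w_1, …, w_n) with w_k ∈ D_k for each 1 ≤ k ≤ n and ∑_{k=1}^n (𝔐_n/𝔐_k)·w_k = a is at most r^{dn}. -/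
/-- Injectivity key: two solution words with the same quotients are equal. -/
lemma digit_tree_key (d : ℕ) (M : ℕ → ℤ) (hM : ∀ k, 0 < M k) :
    ∀ (n : ℕ) (a : Fin d → ℤ) (w w' : Fin n → Fin d → ℤ),
      (∑ k : Fin n, (∏ j ∈ Finset.Ico (k.1 + 1) n, M j) • w k) = a →
      (∑ k : Fin n, (∏ j ∈ Finset.Ico (k.1 + 1) n, M j) • w' k) = a →
      (∀ k : Fin n, ∀ i : Fin d, w k i / M k.1 = w' k i / M k.1) →
      w = w' := by
  intro n
  induction n with
  | zero => intro a w w' _ _ _; funext k; exact k.elim0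
  | succ n ih =>
    intro a w w' hw hw' hq
    rw [Fin.sum_univ_castSucc] at hw hw'
    have hcoeff : ∀ k : Fin n,
        (∏ j ∈ Finset.Ico ((Fin.castSucc k).1 + 1) (n + 1), M j)
          = M n * ∏ j ∈ Finset.Ico (k.1 + 1) n, M j := by
      intro k
      rw [Fin.coe_castSucc, Finset.prod_Ico_succ_top (by omega), mul_comm]
    have hlast : (∏ j ∈ Finset.Ico ((Fin.last n).1 + 1) (n + 1), M j) = 1 := by
      simp
    set S : Fin d → ℤ := ∑ k : Fin n, (∏ j ∈ Finset.Ico (k.1 + 1) n, M j) • (w k.castSucc) with hS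
    set S' : Fin d → ℤ := ∑ k : Fin n, (∏ j ∈ Finset.Ico (k.1 + 1) n, M j) • (w' k.castSucc) with hS'
    have hsum : M n • S + w (Fin.last n) = a := by
      rw [← hw, hlast, one_smul, hS, Finset.smul_sum]
      congr 1
      exact Finset.sum_congr rfl fun k _ => by rw [hcoeff, smul_smul]
    have hsum' : M n • S' + w' (Fin.last n) = a := by
      rw [← hw', hlast, one_smul, hS', Finset.smul_sum]
      congr 1
      exact Finset.sum_congr rfl fun k _ => by rw [hcoeff, smul_smul]
    -- last digits agree
    have hlasteq : w (Fin.last n) = w' (Fin.last n) := by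
      funext i
      have h1 : M n * S i + w (Fin.last n) i = a i := congrFun hsum i
      have h2 : M n * S' i + w' (Fin.last n) i = a i := congrFun hsum' i
      have hm1 : w (Fin.last n) i % M n = a i % M n := by
        rw [← h1, add_comm, mul_comm, Int.add_mul_emod_self_right]
      have hm2 : w' (Fin.last n) i % M n = a i % M n := by
        rw [← h2, add_comm, mul_comm, Int.add_mul_emod_self_right]
      have hqq := hq (Fin.last n) i
      have e1 : w (Fin.last n) i = M n * (w (Fin.last n) i / M n) + w (Fin.last n) i % M n :=
        (Int.mul_ediv_add_emod _ _).symm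
      have e2 : w' (Fin.last n) i = M n * (w' (Fin.last n) i / M n) + w' (Fin.last n) i % M n :=
        (Int.mul_ediv_add_emod _ _).symm
      rw [e1, e2, hm1, hm2]
      simp only [Fin.val_last] at hqq
      rw [hqq]
    have hSeq : S = S' := by
      funext i
      have h1 : M n * S i + w (Fin.last n) i = a i := congrFun hsum i
      have h2 : M n * S' i + w' (Fin.last n) i = a i := congrFun hsum' i
      have := congrFun hlasteq i
      have hne : M n ≠ 0 := (hM n).ne'
      have : M n * S i = M n * S' i := by omega
      exact mul_left_cancel₀ hne this
    have hrec := ih S (fun k => w k.castSucc) (fun k => w' k.castSucc) rfl hSeq.symm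
      (fun k i => by simpa using hq k.castSucc i)
    funext k
    refine Fin.lastCases ?_ ?_ k
    · exact hlasteq
    · intro k; exact congrFun hrec k

/-- Multiplicity bound for the coding map on digit trees:
for digit sets `D_k = {0,…,r(M_k−1)}^d`, the number of words `(w_1,…,w_n)` with
`∑_k (M_{k+1}⋯M_n)·w_k = a` is at most `r^(d n)`.  (Here `M` is `0`-indexed: `M k`
plays the role of `M_{k+1}`, so the coefficient of `w k` is `∏_{j ∈ [k+1, n)} M j`.) -/
theorem digit_tree_multiplicity (d r : ℕ) (hd : 1 ≤ d) (hr : 1 ≤ r)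
    (M : ℕ → ℤ) (hM : ∀ k, 2 ≤ M k) (n : ℕ) (a : Fin d → ℤ) :
    Nat.card {w : Fin n → (Fin d → ℤ) //
        (∀ k : Fin n, ∀ i : Fin d, 0 ≤ w k i ∧ w k i ≤ (r : ℤ) * (M k - 1)) ∧
        (∑ k : Fin n, (∏ j ∈ Finset.Ico (k.1 + 1) n, M j) • w k) = a } ≤
      r ^ (d * n) := by
  have hMpos : ∀ k, 0 < M k := fun k => lt_of_lt_of_le one_pos (by linarith [hM k])
  have hbound : ∀ (w : Fin n → Fin d → ℤ),
      (∀ k : Fin n, ∀ i : Fin d, 0 ≤ w k i ∧ w k i ≤ (r : ℤ) * (M k - 1)) →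
      ∀ k i, (w k i / M k.1).toNat < r := by
    intro w hb k i
    obtain ⟨h0, h1⟩ := hb k i
    have hpos := hMpos k.1
    have hlt : w k i < r * M k.1 := by nlinarith [hM k.1]
    have hdiv : w k i / M k.1 < r := by
      rw [Int.ediv_lt_iff_lt_mul hpos]; linarith
    have hd0 : 0 ≤ w k i / M k.1 := Int.ediv_nonneg h0 hpos.le
    omega
  let f : {w : Fin n → (Fin d → ℤ) //
        (∀ k : Fin n, ∀ i : Fin d, 0 ≤ w k i ∧ w k i ≤ (r : ℤ) * (M k - 1)) ∧
        (∑ k : Fin n, (∏ j ∈ Finset.Ico (k.1 + 1) n, M j) • w k) = a } →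
      (Fin n → Fin d → Fin r) :=
    fun w k i => ⟨(w.1 k i / M k.1).toNat, hbound w.1 w.2.1 k i⟩
  have hinj : Function.Injective f := by
    intro w w' h
    have hq : ∀ k : Fin n, ∀ i : Fin d, w.1 k i / M k.1 = w'.1 k i / M k.1 := by
      intro k i
      have := congrArg Fin.val (congrFun (congrFun h k) i)
      simp only [f] at this
      have h0 : 0 ≤ w.1 k i / M k.1 := Int.ediv_nonneg (w.2.1 k i).1 (hMpos k.1).le
      have h0' : 0 ≤ w'.1 k i / M k.1 := Int.ediv_nonneg (w'.2.1 k i).1 (hMpos k.1).le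
      omega
    exact Subtype.ext (digit_tree_key d M hMpos n a w.1 w'.1 w.2.2 w'.2.2 hq)
  calc Nat.card {w : Fin n → (Fin d → ℤ) //
        (∀ k : Fin n, ∀ i : Fin d, 0 ≤ w k i ∧ w k i ≤ (r : ℤ) * (M k - 1)) ∧
        (∑ k : Fin n, (∏ j ∈ Finset.Ico (k.1 + 1) n, M j) • w k) = a }
      ≤ Nat.card (Fin n → Fin d → Fin r) := Nat.card_le_card_of_injective f hinj
    _ = r ^ (d * n) := by
        rw [Nat.card_eq_fintype_card]
        simp only [Fintype.card_fun, Fintype.card_fin]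
        rw [← pow_mul]
end

section
/- Let (Ω, ℱ, ℙ) be a probability space (with Ω a standard Borel space), let 𝒢 ⊆ ℱ be a sub-σ-algebra, and let Y_1, …, Y_N be complex-valued random variables that are conditionally independent given 𝒢 and satisfy E[Y_j | 𝒢] = 0 almost surely and |Y_j| ≤ 2 almost surely, for 1 ≤ j ≤ N. Then for all 𝒢-measurable complex-valued random variables a_1, …, a_N and every t > 0, one has almost surely ℙ( |∑_{j=1}^N a_j Y_j| ≥ t | 𝒢 ) ≤ 4·exp( −t² / (16·∑_{j=1}^N |a_j|²) ), with the convention that the right-hand side is 0 when ∑_{j=1}^N |a_j|² = 0. -/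
open MeasureTheory ProbabilityTheory Real

lemma CH.rat_le_iff_eq {a b : ℝ} (h : ∀ q : ℚ, a ≤ q ↔ b ≤ q) : a = b := by
  by_contra hne
  rcases lt_or_gt_of_ne hne with hlt | hlt
  · obtain ⟨q, hq1, hq2⟩ := exists_rat_btwn hlt
    exact absurd ((h q).1 hq1.le) (not_le.2 hq2)
  · obtain ⟨q, hq1, hq2⟩ := exists_rat_btwn hlt
    exact absurd ((h q).2 hq1.le) (not_le.2 hq2)

lemma CH.countable_generatePiSystem {α : Type*} {S : Set (Set α)} (hS : S.Countable) :
    (generatePiSystem S).Countable := by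
  have h : generatePiSystem S ⊆ (fun T => ⋂₀ T) '' {T : Set (Set α) | T.Finite ∧ T ⊆ S} := by
    intro t ht
    induction ht with
    | base h_s =>
      exact ⟨{_}, ⟨Set.finite_singleton _, Set.singleton_subset_iff.2 h_s⟩, Set.sInter_singleton _⟩
    | inter h_s h_t h_ne ih_s ih_t =>
      obtain ⟨T1, ⟨hT1f, hT1s⟩, rfl⟩ := ih_s
      obtain ⟨T2, ⟨hT2f, hT2s⟩, rfl⟩ := ih_t
      exact ⟨T1 ∪ T2, ⟨hT1f.union hT2f, Set.union_subset hT1s hT2s⟩,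
        by simp only [Set.sInter_union]⟩
  exact ((Set.countable_setOf_finite_subset hS).image _).mono h

lemma CH.mgf_le {W : Type*} [MeasurableSpace W] (μ : Measure W) [IsProbabilityMeasure μ]
    (X : W → ℝ) (hX : Measurable X) (hmean : ∫ x, X x ∂μ = 0)
    (c : ℝ) (hc : 0 ≤ c) (hbdd : ∀ᵐ x ∂μ, |X x| ≤ c) (l : ℝ) :
    mgf X μ l ≤ exp (l ^ 2 * c ^ 2 / 2) := by
  have hXint : Integrable X μ :=
    Integrable.mono' (integrable_const c) hX.aestronglyMeasurable
      (by filter_upwards [hbdd] with x hx; simpa using hx)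
  rcases eq_or_lt_of_le hc with hc0 | hc0
  · have hX0 : ∀ᵐ x ∂μ, X x = 0 := by
      filter_upwards [hbdd] with x hx
      rw [← hc0] at hx
      exact abs_eq_zero.mp (le_antisymm hx (abs_nonneg _))
    have : mgf X μ l = 1 := by
      rw [mgf, integral_congr_ae (g := fun _ => (1 : ℝ)) ?_, integral_const]
      · simp
      · filter_upwards [hX0] with x hx; simp [hx]
    rw [this]
    exact Real.one_le_exp (by positivity)
  · have hint : Integrable (fun x => exp (l * X x)) μ := by
      refine Integrable.mono' (integrable_const (exp (|l| * c)))
        ((hX.const_mul l).exp.aestronglyMeasurable) ?_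
      filter_upwards [hbdd] with x hx
      rw [Real.norm_eq_abs, Real.abs_exp, exp_le_exp]
      calc l * X x ≤ |l * X x| := le_abs_self _
        _ = |l| * |X x| := abs_mul _ _
        _ ≤ |l| * c := by gcongr
    have hint2 : Integrable (fun x => cosh (l * c) + X x / c * sinh (l * c)) μ :=
      (integrable_const _).add ((hXint.div_const c).mul_const _)
    have hptwise : ∀ᵐ x ∂μ, exp (l * X x) ≤ cosh (l * c) + X x / c * sinh (l * c) := by
      filter_upwards [hbdd] with x hx
      have h1 : |X x / c| ≤ 1 := by
        rw [abs_div, abs_of_pos hc0, div_le_one hc0]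
        exact hx
      have := Real.exp_mul_le_cosh_add_mul_sinh h1 (l * c)
      calc exp (l * X x) = exp (X x / c * (l * c)) := by field_simp
        _ ≤ cosh (l * c) + X x / c * sinh (l * c) := this
    calc mgf X μ l = ∫ x, exp (l * X x) ∂μ := rfl
      _ ≤ ∫ x, (cosh (l * c) + X x / c * sinh (l * c)) ∂μ := integral_mono_ae hint hint2 hptwise
      _ = cosh (l * c) + (∫ x, X x ∂μ) / c * sinh (l * c) := by
          rw [integral_add (integrable_const _) ((hXint.div_const c).mul_const _), integral_const]
          simp [integral_mul_const, integral_div]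
      _ = cosh (l * c) := by rw [hmean]; simp
      _ ≤ exp ((l * c) ^ 2 / 2) := Real.cosh_le_exp_half_sq _
      _ = exp (l ^ 2 * c ^ 2 / 2) := by rw [mul_pow]

lemma CH.tail {W : Type*} [MeasurableSpace W] (μ : Measure W) [IsProbabilityMeasure μ]
    {n : ℕ} (X : Fin n → W → ℝ) (hX : ∀ j, Measurable (X j))
    (hindep : iIndepFun X μ)
    (hmean : ∀ j, ∫ x, X j x ∂μ = 0)
    (c : Fin n → ℝ) (hc : ∀ j, 0 ≤ c j)
    (hbdd : ∀ j, ∀ᵐ x ∂μ, |X j x| ≤ c j)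
    (s : ℝ) (hs : 0 < s) (hV : 0 < ∑ j, c j ^ 2) :
    (μ {x | s ≤ ∑ j, X j x}).toReal ≤ exp (- s ^ 2 / (2 * ∑ j, c j ^ 2)) := by
  set V := ∑ j, c j ^ 2 with hVdef
  set l := s / V with hldef
  have hl : 0 ≤ l := (div_pos hs hV).le
  have hsum_meas : Measurable (fun x => ∑ j, X j x) :=
    Finset.measurable_sum _ (fun j _ => hX j)
  have hintsum : Integrable (fun x => exp (l * ∑ j, X j x)) μ := by
    refine Integrable.mono' (integrable_const (exp (l * ∑ j, c j)))
      ((hsum_meas.const_mul l).exp.aestronglyMeasurable) ?_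
    have hb : ∀ᵐ x ∂μ, ∀ j, |X j x| ≤ c j := ae_all_iff.2 hbdd
    filter_upwards [hb] with x hx
    rw [Real.norm_eq_abs, Real.abs_exp, exp_le_exp]
    have : ∑ j, X j x ≤ ∑ j, c j :=
      Finset.sum_le_sum fun j _ => (le_abs_self _).trans (hx j)
    exact mul_le_mul_of_nonneg_left this hl
  have hfun : (fun x => ∑ j, X j x) = ∑ j, X j := by ext x; simp
  have hmgf : mgf (fun x => ∑ j, X j x) μ l ≤ exp (l ^ 2 * V / 2) := by
    rw [hfun, iIndepFun.mgf_sum hindep hX Finset.univ]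
    calc ∏ j, mgf (X j) μ l ≤ ∏ j, exp (l ^ 2 * c j ^ 2 / 2) :=
          Finset.prod_le_prod (fun j _ => mgf_nonneg)
            (fun j _ => CH.mgf_le μ (X j) (hX j) (hmean j) (c j) (hc j) (hbdd j) l)
      _ = exp (∑ j, l ^ 2 * c j ^ 2 / 2) := by rw [← Real.exp_sum]
      _ = exp (l ^ 2 * V / 2) := by rw [hVdef, Finset.mul_sum, Finset.sum_div]
  have hcher := measure_ge_le_exp_mul_mgf (μ := μ) (X := fun x => ∑ j, X j x) s hl hintsum
  refine hcher.trans ?_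
  calc exp (-l * s) * mgf (fun x => ∑ j, X j x) μ l
      ≤ exp (-l * s) * exp (l ^ 2 * V / 2) :=
        mul_le_mul_of_nonneg_left hmgf (exp_nonneg _)
    _ = exp (-l * s + l ^ 2 * V / 2) := (Real.exp_add _ _).symm
    _ = exp (- s ^ 2 / (2 * V)) := by
        congr 1
        rw [hldef]
        field_simp
        ring

lemma CH.tail_one {W : Type*} [MeasurableSpace W] (μ : Measure W) [IsProbabilityMeasure μ]
    {n : ℕ} (Y : Fin n → W → ℂ) (hY : ∀ j, Measurable (Y j))
    (hindep : iIndepFun Y μ)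
    (hmean : ∀ j, ∫ x, Y j x ∂μ = 0)
    (hbdd : ∀ j, ∀ᵐ x ∂μ, ‖Y j x‖ ≤ 2)
    (b : Fin n → ℂ) (φ : ℂ →L[ℝ] ℝ) (hφ : ∀ z, |φ z| ≤ ‖z‖)
    (s : ℝ) (hs : 0 < s) (hV : 0 < ∑ j, ‖b j‖ ^ 2) :
    (μ {x | s ≤ φ (∑ j, b j * Y j x)}).toReal ≤ exp (- s ^ 2 / (8 * ∑ j, ‖b j‖ ^ 2)) := by
  set X : Fin n → W → ℝ := fun j x => φ (b j * Y j x) with hXdef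
  have hXmeas : ∀ j, Measurable (X j) :=
    fun j => φ.continuous.measurable.comp (measurable_const.mul (hY j))
  have hXindep : iIndepFun X μ :=
    hindep.comp (fun j z => φ (b j * z))
      (fun j => φ.continuous.measurable.comp (measurable_const.mul measurable_id))
  have hYint : ∀ j, Integrable (Y j) μ := fun j =>
    Integrable.mono' (integrable_const 2) (hY j).aestronglyMeasurable (hbdd j)
  have hXmean : ∀ j, ∫ x, X j x ∂μ = 0 := by
    intro j
    have hint : Integrable (fun x => b j * Y j x) μ := (hYint j).const_mul _
    have h2 : ∫ x, b j * Y j x ∂μ = b j * ∫ x, Y j x ∂μ := by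
      simpa using integral_smul (μ := μ) (b j) (Y j)
    rw [hXdef]
    rw [φ.integral_comp_comm hint, h2, hmean j, mul_zero, map_zero]
  have hXbdd : ∀ j, ∀ᵐ x ∂μ, |X j x| ≤ 2 * ‖b j‖ := by
    intro j
    filter_upwards [hbdd j] with x hx
    calc |X j x| ≤ ‖b j * Y j x‖ := hφ _
      _ = ‖b j‖ * ‖Y j x‖ := norm_mul _ _
      _ ≤ ‖b j‖ * 2 := by gcongr
      _ = 2 * ‖b j‖ := mul_comm _ _
  have hV' : 0 < ∑ j, (2 * ‖b j‖) ^ 2 := by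
    calc (0:ℝ) < 4 * ∑ j, ‖b j‖ ^ 2 := by linarith
      _ = ∑ j, (2 * ‖b j‖) ^ 2 := by rw [Finset.mul_sum]; congr 1; ext j; ring
  have hmain := CH.tail μ X hXmeas hXindep hXmean (fun j => 2 * ‖b j‖)
    (fun j => by positivity) hXbdd s hs hV'
  have hset : {x | s ≤ φ (∑ j, b j * Y j x)} = {x | s ≤ ∑ j, X j x} := by
    ext x
    simp only [Set.mem_setOf_eq, hXdef]
    rw [map_sum]
  rw [hset]
  refine hmain.trans (le_of_eq ?_)
  congr 1
  have h4 : ∑ j, (2 * ‖b j‖) ^ 2 = 4 * ∑ j, ‖b j‖ ^ 2 := by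
    rw [Finset.mul_sum]; congr 1; ext j; ring
  rw [h4]; ring_nf

/-- Conditional Hoeffding inequality for complex random variables. -/
theorem conditional_hoeffding
    {Ω : Type*} (𝒢 : MeasurableSpace Ω) [mΩ : MeasurableSpace Ω] [StandardBorelSpace Ω] [Nonempty Ω]
    (P : Measure Ω) [IsProbabilityMeasure P]
    (h𝒢 : 𝒢 ≤ mΩ)
    (N : ℕ) (Y : Fin N → Ω → ℂ)
    (hYmeas : ∀ j, Measurable (Y j))
    (hindep : iCondIndepFun 𝒢 h𝒢 Y P)
    (hYmean : ∀ j, P[Y j | 𝒢] =ᵐ[P] 0)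
    (hYbdd : ∀ j, ∀ᵐ ω ∂P, ‖Y j ω‖ ≤ 2)
    (a : Fin N → Ω → ℂ) (ha : ∀ j, Measurable[𝒢] (a j))
    (t : ℝ) (ht : 0 < t) :
    ∀ᵐ ω ∂P,
      (P[Set.indicator {ω' | t ≤ ‖∑ j, a j ω' * Y j ω'‖} (fun _ => (1 : ℝ)) | 𝒢]) ω ≤
        if (∑ j, ‖a j ω‖ ^ 2) = 0 then 0
        else 4 * Real.exp (-(t ^ 2) / (16 * ∑ j, ‖a j ω‖ ^ 2)) := by
  classical
  letI : MeasurableSpace Ω := mΩ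
  have hYm : ∀ j, Measurable (Y j) := fun j => (hYmeas j)
  set κ := condExpKernel (mΩ := mΩ) P 𝒢 with hκdef
  -- countable π-system generating the Borel σ-algebra of ℂ
  set 𝒞 : Set (Set ℂ) := generatePiSystem (MeasurableSpace.countableGeneratingSet ℂ) with h𝒞def
  have h𝒞c : 𝒞.Countable :=
    CH.countable_generatePiSystem MeasurableSpace.countable_countableGeneratingSet
  have h𝒞pi : IsPiSystem 𝒞 := isPiSystem_generatePiSystem _
  have h𝒞gen : MeasurableSpace.generateFrom 𝒞 = (inferInstance : MeasurableSpace ℂ) := by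
    rw [h𝒞def, generateFrom_generatePiSystem_eq,
      MeasurableSpace.generateFrom_countableGeneratingSet]
  have h𝒞meas : ∀ C ∈ 𝒞, MeasurableSet C := fun C hC =>
    generatePiSystem_measurableSet
      (fun s hs => MeasurableSpace.measurableSet_countableGeneratingSet hs) C hC
  have h𝒞ne : 𝒞.Nonempty :=
    ⟨∅, generatePiSystem.base MeasurableSpace.empty_mem_countableGeneratingSet⟩
  have h𝒞sub := h𝒞c.to_subtype
  -- a 𝒢-measurable set is a.s. fixed by the conditional kernel
  have hfix : ∀ s : Set Ω, MeasurableSet[𝒢] s →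
      ∀ᵐ ω ∂P, ∀ᵐ x ∂(κ ω), (x ∈ s ↔ ω ∈ s) := by
    intro s hs
    have h1 := condExpKernel_ae_eq_condExp (μ := P) h𝒢 (h𝒢 _ hs)
    have h2 : P[s.indicator (fun _ => (1:ℝ)) | 𝒢] = s.indicator (fun _ => (1:ℝ)) :=
      condExp_of_stronglyMeasurable h𝒢
        ((@stronglyMeasurable_const Ω ℝ 𝒢 _ 1).indicator hs)
        ((integrable_const (1:ℝ)).indicator (h𝒢 _ hs))
    rw [h2] at h1
    filter_upwards [h1] with ω hω
    by_cases hωs : ω ∈ s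
    · have h3 : (κ ω s).toReal = 1 := by
        rw [← measureReal_def, hω, Set.indicator_of_mem hωs]
      have hme : κ ω s = 1 := by
        have hne := measure_ne_top (κ ω) s
        rwa [ENNReal.toReal_eq_one_iff] at h3
      have hcompl : κ ω sᶜ = 0 := by
        have hIsP : IsProbabilityMeasure (κ ω) := inferInstance
        have := measure_compl (h𝒢 _ hs) (measure_ne_top (κ ω) s)
        rw [hme, measure_univ] at this
        simpa using this
      have : κ ω {x | ¬ (x ∈ s ↔ ω ∈ s)} = 0 := by
        refine measure_mono_null ?_ hcompl
        intro x hx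
        simp only [Set.mem_setOf_eq, hωs, iff_true] at hx
        exact hx
      exact this
    · have h3 : (κ ω s).toReal = 0 := by
        rw [← measureReal_def, hω, Set.indicator_of_notMem hωs]
      have hme : κ ω s = 0 := by
        have hne := measure_ne_top (κ ω) s
        rw [ENNReal.toReal_eq_zero_iff] at h3
        exact h3.resolve_right hne
      have : κ ω {x | ¬ (x ∈ s ↔ ω ∈ s)} = 0 := by
        refine measure_mono_null ?_ hme
        intro x hx
        simp only [Set.mem_setOf_eq, hωs, iff_false, not_not] at hx
        exact hx
      exact this
  -- the coefficients are a.s. fixed by the conditional kernel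
  have hPull : ∀ j, ∀ᵐ ω ∂P, ∀ᵐ x ∂(κ ω), a j x = a j ω := by
    intro j
    have hre : Measurable[𝒢] fun x => (a j x).re := Complex.measurable_re.comp (ha j)
    have him : Measurable[𝒢] fun x => (a j x).im := Complex.measurable_im.comp (ha j)
    have h1 : ∀ q : ℚ, ∀ᵐ ω ∂P, ∀ᵐ x ∂(κ ω),
        (x ∈ (fun y => (a j y).re) ⁻¹' Set.Iic (q:ℝ) ↔
          ω ∈ (fun y => (a j y).re) ⁻¹' Set.Iic (q:ℝ)) := fun q =>
      hfix _ (hre measurableSet_Iic)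
    have h2 : ∀ q : ℚ, ∀ᵐ ω ∂P, ∀ᵐ x ∂(κ ω),
        (x ∈ (fun y => (a j y).im) ⁻¹' Set.Iic (q:ℝ) ↔
          ω ∈ (fun y => (a j y).im) ⁻¹' Set.Iic (q:ℝ)) := fun q =>
      hfix _ (him measurableSet_Iic)
    filter_upwards [ae_all_iff.2 h1, ae_all_iff.2 h2] with ω hω1 hω2
    have hx : ∀ᵐ x ∂(κ ω), ∀ q : ℚ,
        ((a j x).re ≤ (q:ℝ) ↔ (a j ω).re ≤ (q:ℝ)) ∧
        ((a j x).im ≤ (q:ℝ) ↔ (a j ω).im ≤ (q:ℝ)) := by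
      rw [ae_all_iff]
      intro q
      filter_upwards [hω1 q, hω2 q] with x hx1 hx2
      simp only [Set.mem_preimage, Set.mem_Iic] at hx1 hx2
      exact ⟨hx1, hx2⟩
    filter_upwards [hx] with x hx
    exact Complex.ext (CH.rat_le_iff_eq fun q => (hx q).1) (CH.rat_le_iff_eq fun q => (hx q).2)
  -- null sets stay null under the conditional kernel
  have hnull : ∀ S : Set Ω, MeasurableSet S → P S = 0 → ∀ᵐ ω ∂P, κ ω S = 0 := by
    intro S hS hS0
    have h1 := condExpKernel_ae_eq_condExp (μ := P) h𝒢 hS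
    have h2 : (P[S.indicator (fun _ => (1:ℝ)) | 𝒢]) =ᵐ[P] 0 := by
      have hind : S.indicator (fun _ => (1:ℝ)) =ᵐ[P] 0 := by
        have hnm : ∀ᵐ x ∂P, x ∉ S := by
          rw [ae_iff]
          simpa using hS0
        filter_upwards [hnm] with x hx
        simp [Set.indicator_of_notMem hx]
      calc P[S.indicator (fun _ => (1:ℝ)) | 𝒢] =ᵐ[P] P[(0 : Ω → ℝ) | 𝒢] := condExp_congr_ae hind
        _ = 0 := condExp_zero
    filter_upwards [h1.trans h2] with ω hω
    simp only [Pi.zero_apply, measureReal_def] at hω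
    have hne := measure_ne_top (κ ω) S
    rw [ENNReal.toReal_eq_zero_iff] at hω
    exact hω.resolve_right hne
  -- boundedness under the conditional kernel
  have hbddκ : ∀ᵐ ω ∂P, ∀ j, ∀ᵐ x ∂(κ ω), ‖Y j x‖ ≤ 2 := by
    rw [ae_all_iff]
    intro j
    have hSmeas : MeasurableSet {x | ¬ ‖Y j x‖ ≤ 2} := by
      have : MeasurableSet {x | ‖Y j x‖ ≤ 2} := measurableSet_le (hYm j).norm measurable_const
      simpa [Set.compl_setOf] using this.compl
    have hS0 : P {x | ¬ ‖Y j x‖ ≤ 2} = 0 := ae_iff.1 (hYbdd j)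
    filter_upwards [hnull _ hSmeas hS0] with ω hω
    exact ae_iff.2 hω
  -- conditional means vanish
  have hmeanκ : ∀ᵐ ω ∂P, ∀ j, ∫ x, Y j x ∂(κ ω) = 0 := by
    rw [ae_all_iff]
    intro j
    have hint : Integrable (Y j) P :=
      Integrable.mono' (integrable_const 2) (hYm j).aestronglyMeasurable (hYbdd j)
    have h1 := condExp_ae_eq_integral_condExpKernel h𝒢 hint
    filter_upwards [h1.symm.trans (hYmean j)] with ω hω
    simpa using hω
  -- conditional independence gives a.e. independence under the kernel
  have hindepK : Kernel.iIndepFun Y κ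
      (P.trim h𝒢) := hindep
  have hindep' : ∀ (s : Finset (Fin N)) (g : Fin N → 𝒞),
      ∀ᵐ ω ∂P, κ ω (⋂ i ∈ s, Y i ⁻¹' (g i : Set ℂ)) = ∏ i ∈ s, κ ω (Y i ⁻¹' (g i : Set ℂ)) := by
    intro s g
    refine ae_of_ae_trim h𝒢 ?_
    exact hindepK.meas_biInter (S := s) (s := fun i => Y i ⁻¹' (g i : Set ℂ))
      (fun i _ => ⟨(g i : Set ℂ), h𝒞meas _ (g i).2, rfl⟩)
  have hIndepAe : ∀ᵐ ω ∂P,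
      iIndepFun Y (κ ω) := by
    have hall : ∀ᵐ ω ∂P, ∀ (s : Finset (Fin N)) (g : Fin N → 𝒞),
        κ ω (⋂ i ∈ s, Y i ⁻¹' (g i : Set ℂ)) = ∏ i ∈ s, κ ω (Y i ⁻¹' (g i : Set ℂ)) := by
      rw [ae_all_iff]
      intro s
      rw [ae_all_iff]
      intro g
      exact hindep' s g
    filter_upwards [hall] with ω hω
    have hprob : IsProbabilityMeasure (κ ω) := inferInstance
    have hgen : ∀ i : Fin N,
        (inferInstance : MeasurableSpace ℂ).comap (Y i) =
          MeasurableSpace.generateFrom {T | ∃ C ∈ 𝒞, Y i ⁻¹' C = T} := by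
      intro i
      rw [← h𝒞gen, MeasurableSpace.comap_generateFrom]
      rfl
    have hsets : iIndepSets (fun i => {T | ∃ C ∈ 𝒞, Y i ⁻¹' C = T}) (κ ω) := by
      rw [iIndepSets_iff]
      intro s setsf hsets
      choose C hC hCY using fun i (hi : i ∈ s) => hsets i hi
      obtain ⟨D, hD⟩ := h𝒞ne
      set g : Fin N → 𝒞 := fun i => if hi : i ∈ s then ⟨C i hi, hC i hi⟩ else ⟨D, hD⟩ with hgdef
      have hgs : ∀ i ∈ s, Y i ⁻¹' (g i : Set ℂ) = setsf i := by
        intro i hi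
        simp only [hgdef, dif_pos hi]
        exact hCY i hi
      have h1 : (⋂ i ∈ s, Y i ⁻¹' (g i : Set ℂ)) = ⋂ i ∈ s, setsf i := Set.iInter₂_congr hgs
      have h2 : ∏ i ∈ s, κ ω (Y i ⁻¹' (g i : Set ℂ)) = ∏ i ∈ s, κ ω (setsf i) :=
        Finset.prod_congr rfl (fun i hi => by rw [hgs i hi])
      rw [← h1, ← h2]
      exact hω s g
    exact iIndepSets.iIndep (fun i => (hYm i).comap_le) _
      (fun i => h𝒞pi.comap (Y i)) hgen hsets
  -- the target set
  set A : Set Ω := {ω' | t ≤ ‖∑ j, a j ω' * Y j ω'‖} with hAdef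
  have hAmeas : MeasurableSet A := by
    have hm : Measurable fun ω' => ‖∑ j, a j ω' * Y j ω'‖ :=
      (Finset.measurable_sum _ (fun j _ => ((ha j).mono h𝒢 le_rfl).mul (hYm j))).norm
    exact measurableSet_le measurable_const hm
  have hLHS := condExpKernel_ae_eq_condExp (μ := P) h𝒢 hAmeas
  -- main part
  filter_upwards [hLHS, hbddκ, hmeanκ, hIndepAe, ae_all_iff.2 hPull]
    with ω hω1 hωBdd hωMean hωInd hωPull
  rw [← hω1]
  have hprob : IsProbabilityMeasure (κ ω) := inferInstance
  have hPull' : ∀ᵐ x ∂(κ ω), ∀ j, a j x = a j ω := ae_all_iff.2 hωPull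
  set A' : Set Ω := {x | t ≤ ‖∑ j, a j ω * Y j x‖} with hA'def
  have hAeq : κ ω A = κ ω A' := by
    refine measure_congr ?_
    rw [Filter.eventuallyEq_set]
    filter_upwards [hPull'] with x hx
    simp only [hAdef, hA'def, Set.mem_setOf_eq]
    constructor <;> intro h <;> [skip; skip] <;>
      · refine le_trans h (le_of_eq ?_)
        congr 1
        exact Finset.sum_congr rfl (fun j _ => by rw [hx j])
  by_cases hV0 : (∑ j, ‖a j ω‖ ^ 2) = 0
  · rw [if_pos hV0]
    have hzero : ∀ j, a j ω = 0 := by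
      intro j
      have := (Finset.sum_eq_zero_iff_of_nonneg (fun j _ => sq_nonneg ‖a j ω‖)).1 hV0 j
        (Finset.mem_univ j)
      have : ‖a j ω‖ = 0 := by
        have h2 := this
        nlinarith [norm_nonneg (a j ω)]
      exact norm_eq_zero.1 this
    have hA'empty : A' = ∅ := by
      rw [hA'def]
      ext x
      simp only [Set.mem_setOf_eq, Set.mem_empty_iff_false, iff_false, not_le]
      calc ‖∑ j, a j ω * Y j x‖ = 0 := by
            simp [hzero]
        _ < t := ht
    rw [measureReal_def, hAeq, hA'empty]
    simp
  · rw [if_neg hV0]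
    have hVpos : 0 < ∑ j, ‖a j ω‖ ^ 2 := by
      rcases (Finset.sum_nonneg (fun j _ => sq_nonneg ‖a j ω‖)).lt_or_eq with h | h
      · exact h
      · exact absurd h.symm hV0
    set V : ℝ := ∑ j, ‖a j ω‖ ^ 2 with hVdef
    set s : ℝ := t / Real.sqrt 2 with hsdef
    have hspos : 0 < s := div_pos ht (Real.sqrt_pos.2 two_pos)
    have hs2 : s ^ 2 = t ^ 2 / 2 := by
      rw [hsdef, div_pow, Real.sq_sqrt (by norm_num : (0:ℝ) ≤ 2)]
    set b : Fin N → ℂ := fun j => a j ω with hbdef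
    have hφre : ∀ z : ℂ, |Complex.reCLM z| ≤ ‖z‖ := by
      intro z
      simpa using Complex.abs_re_le_norm z
    have hφim : ∀ z : ℂ, |Complex.imCLM z| ≤ ‖z‖ := by
      intro z
      simpa using Complex.abs_im_le_norm z
    have hφren : ∀ z : ℂ, |(-Complex.reCLM) z| ≤ ‖z‖ := by
      intro z
      simpa [abs_neg] using hφre z
    have hφimn : ∀ z : ℂ, |(-Complex.imCLM) z| ≤ ‖z‖ := by
      intro z
      simpa [abs_neg] using hφim z
    have hB := fun (φ : ℂ →L[ℝ] ℝ) (hφ : ∀ z, |φ z| ≤ ‖z‖) =>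
      CH.tail_one (κ ω) Y hYm hωInd hωMean hωBdd b φ hφ s hspos hVpos
    set S : Ω → ℂ := fun x => ∑ j, b j * Y j x with hSdef
    set B1 : Set Ω := {x | s ≤ Complex.reCLM (S x)} with hB1def
    set B2 : Set Ω := {x | s ≤ (-Complex.reCLM) (S x)} with hB2def
    set B3 : Set Ω := {x | s ≤ Complex.imCLM (S x)} with hB3def
    set B4 : Set Ω := {x | s ≤ (-Complex.imCLM) (S x)} with hB4def
    have hsub : A' ⊆ ((B1 ∪ B2) ∪ B3) ∪ B4 := by
      intro x hx
      have hz : t ≤ ‖S x‖ := hx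
      have hnormsq : ‖S x‖ ^ 2 = (S x).re ^ 2 + (S x).im ^ 2 := by
        rw [Complex.sq_norm, Complex.normSq_apply]
        ring
      have ht2 : t ^ 2 ≤ (S x).re ^ 2 + (S x).im ^ 2 := by
        nlinarith [norm_nonneg (S x)]
      have key : ∀ r : ℝ, t ^ 2 / 2 ≤ r ^ 2 → s ≤ r ∨ s ≤ -r := by
        intro r hr
        have h1 : s ≤ |r| := by
          have h2 : Real.sqrt (s ^ 2) ≤ Real.sqrt (r ^ 2) := Real.sqrt_le_sqrt (by linarith [hs2])
          rwa [Real.sqrt_sq hspos.le, Real.sqrt_sq_eq_abs] at h2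
        rcases abs_cases r with ⟨h, _⟩ | ⟨h, _⟩
        · exact Or.inl (h ▸ h1)
        · exact Or.inr (h ▸ h1)
      rcases le_or_gt (t ^ 2 / 2) ((S x).re ^ 2) with h | h
      · rcases key _ h with h' | h'
        · exact Or.inl (Or.inl (Or.inl h'))
        · refine Or.inl (Or.inl (Or.inr ?_))
          simpa [hB2def] using h'
      · have him : t ^ 2 / 2 ≤ (S x).im ^ 2 := by linarith
        rcases key _ him with h' | h'
        · exact Or.inl (Or.inr h')
        · refine Or.inr ?_
          simpa [hB4def] using h'
    have hle : κ ω A' ≤ κ ω B1 + κ ω B2 + κ ω B3 + κ ω B4 := by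
      refine (measure_mono hsub).trans ?_
      calc κ ω (((B1 ∪ B2) ∪ B3) ∪ B4) ≤ κ ω ((B1 ∪ B2) ∪ B3) + κ ω B4 := measure_union_le _ _
        _ ≤ (κ ω (B1 ∪ B2) + κ ω B3) + κ ω B4 := by gcongr; exact measure_union_le _ _
        _ ≤ ((κ ω B1 + κ ω B2) + κ ω B3) + κ ω B4 := by gcongr; exact measure_union_le _ _
    have htoReal : (κ ω A').toReal ≤
        (κ ω B1).toReal + (κ ω B2).toReal + (κ ω B3).toReal + (κ ω B4).toReal := by
      have hfin : ∀ s₀ : Set Ω, κ ω s₀ ≠ ⊤ := fun s₀ => measure_ne_top _ _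
      have := ENNReal.toReal_mono
        (by exact ENNReal.add_ne_top.2 ⟨ENNReal.add_ne_top.2 ⟨ENNReal.add_ne_top.2
          ⟨hfin B1, hfin B2⟩, hfin B3⟩, hfin B4⟩) hle
      rwa [ENNReal.toReal_add (ENNReal.add_ne_top.2 ⟨ENNReal.add_ne_top.2
          ⟨hfin B1, hfin B2⟩, hfin B3⟩) (hfin B4),
        ENNReal.toReal_add (ENNReal.add_ne_top.2 ⟨hfin B1, hfin B2⟩) (hfin B3),
        ENNReal.toReal_add (hfin B1) (hfin B2)] at this
    have hexp : - s ^ 2 / (8 * V) = -(t ^ 2) / (16 * V) := by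
      rw [hs2]
      ring
    have hone : ∀ (φ : ℂ →L[ℝ] ℝ) (hφ : ∀ z, |φ z| ≤ ‖z‖),
        (κ ω {x | s ≤ φ (S x)}).toReal ≤ Real.exp (-(t ^ 2) / (16 * V)) := by
      intro φ hφ
      have := hB φ hφ
      rw [← hexp]
      exact this
    calc (κ ω A).toReal = (κ ω A').toReal := by rw [hAeq]
      _ ≤ (κ ω B1).toReal + (κ ω B2).toReal + (κ ω B3).toReal + (κ ω B4).toReal := htoReal
      _ ≤ Real.exp (-(t ^ 2) / (16 * V)) + Real.exp (-(t ^ 2) / (16 * V)) +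
          Real.exp (-(t ^ 2) / (16 * V)) + Real.exp (-(t ^ 2) / (16 * V)) := by
          gcongr
          · exact hone _ hφre
          · exact hone _ hφren
          · exact hone _ hφim
          · exact hone _ hφimn
      _ = 4 * Real.exp (-(t ^ 2) / (16 * V)) := by ring
end

section
/- Let 𝒟 be a nonempty finite set and let p be a probability mass function on 𝒟 (p(u) ≥ 0, ∑_{u∈𝒟} p(u) = 1). Let ℬ and ℛ be two partitions of 𝒟, and let T ≥ 1 be an integer such that ∑_{u∈B} p(u) ≤ 1/T for every B ∈ ℬ and ∑_{u∈R} p(u) ≤ 1/T for every R ∈ ℛ. Then the family Ω of subsets S ⊆ 𝒟 with #S = T, #(S ∩ B) ≤ 1 for every B ∈ ℬ, and #(S ∩ R) ≤ 1 for every R ∈ ℛ is nonempty; moreover, there exists a probability measure ℙ on Ω such that ℙ({S ∈ Ω : u ∈ S}) = T·p(u) for every u ∈ 𝒟. -/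
open Finset

section Transversal

variable {D : Type*} [DecidableEq D] [Fintype D]

/-- `S` is a transversal (with all elements satisfying `P`) of the family `𝒞`. -/
def TransSet (P : D → Prop) (𝒞 : Finset (Finset D)) (S : Finset D) : Prop :=
  (∀ u ∈ S, P u ∧ ∃ C ∈ 𝒞, u ∈ C) ∧ ∀ C ∈ 𝒞, ∃! u, u ∈ S ∧ u ∈ C

open Classical in
lemma transSet_sum_mem (h : D → ℝ) (P : D → Prop) (𝒞 : Finset (Finset D))
    (hd : (𝒞 : Set (Finset D)).Pairwise (fun C C' => Disjoint C C'))
    {C0 : Finset D} (hC0 : C0 ∈ 𝒞) {u : D} (hu : u ∈ C0) (hP : P u) :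
    (∑ S : Finset D, if TransSet P 𝒞 S ∧ u ∈ S then ∏ v ∈ S, h v else 0)
      = h u * ∑ S : Finset D, if TransSet P (𝒞.erase C0) S then ∏ v ∈ S, h v else 0 := by
  have hdisj : ∀ C ∈ 𝒞, C ≠ C0 → Disjoint C0 C := fun C hC hne => hd hC0 hC (Ne.symm hne)
  rw [← Finset.sum_filter, ← Finset.sum_filter, Finset.mul_sum]
  refine Finset.sum_nbij' (i := fun S => S.erase u) (j := fun S => insert u S) ?_ ?_ ?_ ?_ ?_
  · intro S hS
    simp only [mem_filter, mem_univ, true_and] at hS ⊢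
    obtain ⟨⟨h1, h2⟩, hus⟩ := hS
    constructor
    · intro v hv
      have hv' : v ∈ S := mem_of_mem_erase hv
      obtain ⟨hPv, C, hC, hvC⟩ := h1 v hv'
      refine ⟨hPv, C, ?_, hvC⟩
      rcases eq_or_ne C C0 with rfl | hne
      · exact absurd ((h2 C hC).unique ⟨hv', hvC⟩ ⟨hus, hu⟩) (ne_of_mem_erase hv)
      · exact mem_erase_of_ne_of_mem hne hC
    · intro C hC
      have hC' := mem_of_mem_erase hC
      obtain ⟨w, hw, hwu⟩ := h2 C hC'
      have hwne : w ≠ u := fun hwu =>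
        (hdisj C hC' (ne_of_mem_erase hC)).forall_ne_finset hu (hwu ▸ hw.2) rfl
      exact ⟨w, ⟨mem_erase_of_ne_of_mem hwne hw.1, hw.2⟩,
        fun y hy => hwu y ⟨mem_of_mem_erase hy.1, hy.2⟩⟩
  · intro S hS
    simp only [mem_filter, mem_univ, true_and] at hS ⊢
    obtain ⟨h1, h2⟩ := hS
    have huS : u ∉ S := by
      intro huS
      obtain ⟨_, C, hC, huC⟩ := h1 u huS
      exact (hdisj C (mem_of_mem_erase hC) (ne_of_mem_erase hC)).forall_ne_finset hu huC rfl
    refine ⟨⟨?_, ?_⟩, mem_insert_self u S⟩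
    · intro v hv
      rcases mem_insert.1 hv with rfl | hvS
      · exact ⟨hP, C0, hC0, hu⟩
      · obtain ⟨hPv, C, hC, hvC⟩ := h1 v hvS
        exact ⟨hPv, C, mem_of_mem_erase hC, hvC⟩
    · intro C hC
      rcases eq_or_ne C C0 with rfl | hne
      · refine ⟨u, ⟨mem_insert_self u S, hu⟩, ?_⟩
        rintro y ⟨hyS, hyC⟩
        rcases mem_insert.1 hyS with rfl | hyS'
        · rfl
        · obtain ⟨_, C', hC', hyC'⟩ := h1 y hyS'
          exact absurd rfl ((hdisj C' (mem_of_mem_erase hC') (ne_of_mem_erase hC')).forall_ne_finset hyC hyC')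
      · obtain ⟨w, hw, hwu⟩ := h2 C (mem_erase_of_ne_of_mem hne hC)
        refine ⟨w, ⟨mem_insert_of_mem hw.1, hw.2⟩, ?_⟩
        rintro y ⟨hyS, hyC⟩
        rcases mem_insert.1 hyS with rfl | hyS'
        · exact absurd rfl ((hdisj C hC hne).forall_ne_finset hu hyC)
        · exact hwu y ⟨hyS', hyC⟩
  · intro S hS
    simp only [mem_filter, mem_univ, true_and] at hS
    exact insert_erase hS.2
  · intro S hS
    simp only [mem_filter, mem_univ, true_and] at hS
    obtain ⟨h1, _⟩ := hS
    have huS : u ∉ S := by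
      intro huS
      obtain ⟨_, C, hC, huC⟩ := h1 u huS
      exact (hdisj C (mem_of_mem_erase hC) (ne_of_mem_erase hC)).forall_ne_finset hu huC rfl
    exact erase_insert huS
  · intro S hS
    simp only [mem_filter, mem_univ, true_and] at hS
    exact (Finset.mul_prod_erase S h hS.2).symm

open Classical in
lemma transSet_sum (h : D → ℝ) (P : D → Prop) (𝒞 : Finset (Finset D))
    (hd : (𝒞 : Set (Finset D)).Pairwise (fun C C' => Disjoint C C')) :
    (∑ S : Finset D, if TransSet P 𝒞 S then ∏ v ∈ S, h v else 0)
      = ∏ C ∈ 𝒞, ∑ v ∈ C, (if P v then h v else 0) := by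
  classical
  revert hd
  induction 𝒞 using Finset.induction_on with
  | empty =>
    intro _
    have hT : ∀ S : Finset D, TransSet P ∅ S ↔ S = ∅ := by
      intro S
      constructor
      · intro hS
        by_contra hne
        obtain ⟨v, hv⟩ := Finset.nonempty_iff_ne_empty.2 hne
        obtain ⟨_, C, hC, _⟩ := hS.1 v hv
        exact absurd hC (Finset.notMem_empty C)
      · rintro rfl
        exact ⟨fun u hu => absurd hu (Finset.notMem_empty u),
          fun C hC => absurd hC (Finset.notMem_empty C)⟩
    simp [hT]
  | @insert C s hCs ih =>
    intro hd
    have hds : (s : Set (Finset D)).Pairwise (fun C C' => Disjoint C C') := by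
      apply hd.mono
      simp only [Finset.coe_insert]
      exact Set.subset_insert _ _
    have key : ∀ S : Finset D, (if TransSet P (insert C s) S then ∏ v ∈ S, h v else 0)
        = ∑ v ∈ C, (if P v then
            (if TransSet P (insert C s) S ∧ v ∈ S then ∏ w ∈ S, h w else 0) else 0) := by
      intro S
      by_cases hS : TransSet P (insert C s) S
      · simp only [hS, if_true, true_and]
        obtain ⟨u0, hu0, huu⟩ := hS.2 C (mem_insert_self C s)
        rw [Finset.sum_eq_single u0]
        · have hPu0 := (hS.1 u0 hu0.1).1
          simp [hPu0, hu0.1]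
        · intro v hv hne
          by_cases hPv : P v
          · by_cases hvS : v ∈ S
            · exact absurd (huu v ⟨hvS, hv⟩) hne
            · simp [hPv, hvS]
          · simp [hPv]
        · intro hu0C
          exact absurd hu0.2 hu0C
      · simp [hS]
    calc (∑ S : Finset D, if TransSet P (insert C s) S then ∏ v ∈ S, h v else 0)
        = ∑ S : Finset D, ∑ v ∈ C, (if P v then
            (if TransSet P (insert C s) S ∧ v ∈ S then ∏ w ∈ S, h w else 0) else 0) :=
          Finset.sum_congr rfl (fun S _ => key S)
      _ = ∑ v ∈ C, ∑ S : Finset D, (if P v then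
            (if TransSet P (insert C s) S ∧ v ∈ S then ∏ w ∈ S, h w else 0) else 0) :=
          Finset.sum_comm
      _ = ∑ v ∈ C, (if P v then
            h v * (∑ S : Finset D, if TransSet P s S then ∏ w ∈ S, h w else 0) else 0) := by
          refine Finset.sum_congr rfl fun v hv => ?_
          by_cases hPv : P v
          · simp only [hPv, if_true]
            rw [transSet_sum_mem h P (insert C s) hd (mem_insert_self C s) hv hPv,
              Finset.erase_insert hCs]
          · simp [hPv]
      _ = (∑ v ∈ C, if P v then h v else 0)
            * (∑ S : Finset D, if TransSet P s S then ∏ w ∈ S, h w else 0) := by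
          rw [Finset.sum_mul]
          refine Finset.sum_congr rfl fun v hv => ?_
          split <;> simp
      _ = ∏ C' ∈ insert C s, ∑ v ∈ C', (if P v then h v else 0) := by
          rw [ih hds, Finset.prod_insert hCs]

open Classical in
lemma partition_split {D : Type*} [DecidableEq D] (f : D → ℝ) (s : Finset D)
    (Pa : Finset (Finset D)) (h : ∀ u : D, ∃! B, B ∈ Pa ∧ u ∈ B) :
    ∑ u ∈ s, f u = ∑ B ∈ Pa, ∑ u ∈ s ∩ B, f u := by
  have key : ∀ u ∈ s, f u = ∑ B ∈ Pa, if u ∈ B then f u else 0 := by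
    intro u _
    obtain ⟨B0, hB0, hB0u⟩ := h u
    rw [Finset.sum_eq_single B0]
    · simp [hB0.2]
    · intro B hBm hne
      have : u ∉ B := fun huB => hne (hB0u B ⟨hBm, huB⟩)
      simp [this]
    · intro h0
      exact absurd hB0.1 h0
  rw [Finset.sum_congr rfl key, Finset.sum_comm]
  refine Finset.sum_congr rfl fun B _ => ?_
  rw [← Finset.sum_filter, Finset.filter_mem_eq_inter]

lemma sum_ite_and_eq {α : Type*} [Fintype α] [DecidableEq α] (c : Prop) [Decidable c]
    (a : α) (x : ℝ) : (∑ j : α, if c ∧ j = a then x else 0) = if c then x else 0 := by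
  by_cases hc : c <;> simp [hc]

lemma sum_ite_and_eq' {α : Type*} [Fintype α] [DecidableEq α] (c : Prop) [Decidable c]
    (a : α) (x : ℝ) : (∑ j : α, if j = a ∧ c then x else 0) = if c then x else 0 := by
  by_cases hc : c <;> simp [hc]

lemma ite_sum_comm {α : Type*} (s : Finset α) (c : Prop) [Decidable c] (f : α → ℝ) :
    (∑ x ∈ s, if c then f x else 0) = if c then ∑ x ∈ s, f x else 0 := by
  split <;> simp

end Transversal

/-- `Part` is a partition of the finite type `D` into nonempty cells. -/
def IsFinsetPartition {D : Type*} [DecidableEq D] [Fintype D]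
    (Part : Finset (Finset D)) : Prop :=
  (∀ B ∈ Part, B.Nonempty) ∧ ∀ u : D, ∃! B, B ∈ Part ∧ u ∈ B

/-- Two-partition sampling: if `p` is a probability mass function on `𝒟` and `ℬ`, `ℛ`
are two partitions each of whose cells carries mass at most `1/T`, then transversal-like
subsets `S` of size `T` meeting every cell in at most one point exist, and there is a
probability distribution on such subsets whose one-point marginals are `T·p(u)`. -/
theorem two_partition_sampling {D : Type*} [DecidableEq D] [Fintype D] [Nonempty D]
    (p : D → ℝ) (hp0 : ∀ u, 0 ≤ p u) (hp1 : ∑ u, p u = 1)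
    (ℬ ℛ : Finset (Finset D))
    (hB : IsFinsetPartition ℬ) (hR : IsFinsetPartition ℛ)
    (T : ℕ) (hT : 1 ≤ T)
    (hBp : ∀ B ∈ ℬ, ∑ u ∈ B, p u ≤ 1 / T)
    (hRp : ∀ R ∈ ℛ, ∑ u ∈ R, p u ≤ 1 / T) :
    (∃ S : Finset D, S.card = T ∧ (∀ B ∈ ℬ, (S ∩ B).card ≤ 1) ∧
      (∀ R ∈ ℛ, (S ∩ R).card ≤ 1)) ∧
    ∃ w : Finset D → ℝ,
      (∀ S, 0 ≤ w S) ∧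
      (∑ S : Finset D, w S) = 1 ∧
      (∀ S : Finset D, w S ≠ 0 →
        S.card = T ∧ (∀ B ∈ ℬ, (S ∩ B).card ≤ 1) ∧ (∀ R ∈ ℛ, (S ∩ R).card ≤ 1)) ∧
      ∀ u : D, (∑ S ∈ Finset.univ.filter (fun S : Finset D => u ∈ S), w S) = T * p u := by
  classical
  obtain ⟨hBne, hBu⟩ := hB
  obtain ⟨hRne, hRu⟩ := hR
  have hT0 : (0:ℝ) < T := by exact_mod_cast hT
  set q : D → ℝ := fun u => (T:ℝ) * p u with hqdef
  have hq0 : ∀ u, 0 ≤ q u := fun u => mul_nonneg hT0.le (hp0 u)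
  have hqsum : ∑ u : D, q u = (T:ℝ) := by
    simp only [hqdef, ← Finset.mul_sum, hp1, mul_one]
  have hqB : ∀ B ∈ ℬ, ∑ u ∈ B, q u ≤ 1 := by
    intro B hBm
    have h1 := hBp B hBm
    simp only [hqdef, ← Finset.mul_sum]
    calc (T:ℝ) * ∑ u ∈ B, p u ≤ (T:ℝ) * (1/T) := mul_le_mul_of_nonneg_left h1 hT0.le
    _ = 1 := by field_simp
  have hqR : ∀ R ∈ ℛ, ∑ u ∈ R, q u ≤ 1 := by
    intro R hRm
    have h1 := hRp R hRm
    simp only [hqdef, ← Finset.mul_sum]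
    calc (T:ℝ) * ∑ u ∈ R, p u ≤ (T:ℝ) * (1/T) := mul_le_mul_of_nonneg_left h1 hT0.le
    _ = 1 := by field_simp
  choose fB hfB1 hfB2 using fun u => (hBu u).exists
  choose fR hfR1 hfR2 using fun u => (hRu u).exists
  have hfBuniq : ∀ u B, B ∈ ℬ → u ∈ B → B = fB u := fun u B h1 h2 =>
    (hBu u).unique ⟨h1, h2⟩ ⟨hfB1 u, hfB2 u⟩
  have hfRuniq : ∀ u R, R ∈ ℛ → u ∈ R → R = fR u := fun u R h1 h2 =>
    (hRu u).unique ⟨h1, h2⟩ ⟨hfR1 u, hfR2 u⟩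
  have hBdisj : ∀ B B', B ∈ ℬ → B' ∈ ℬ → B ≠ B' → Disjoint B B' := by
    intro B B' h1 h2 hne
    rw [Finset.disjoint_left]
    intro u huB huB'
    exact hne ((hfBuniq u B h1 huB).trans (hfBuniq u B' h2 huB').symm)
  have hsplitB : ∀ (f : D → ℝ) (s : Finset D), ∑ u ∈ s, f u = ∑ B ∈ ℬ, ∑ u ∈ s ∩ B, f u :=
    fun f s => partition_split f s ℬ hBu
  have hsplitR : ∀ (f : D → ℝ) (s : Finset D), ∑ u ∈ s, f u = ∑ R ∈ ℛ, ∑ u ∈ s ∩ R, f u :=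
    fun f s => partition_split f s ℛ hRu
  have hsumB : ∑ B ∈ ℬ, ∑ u ∈ B, q u = (T:ℝ) := by
    rw [← hqsum, hsplitB q Finset.univ]
    exact Finset.sum_congr rfl fun B _ => by rw [Finset.univ_inter]
  have hsumR : ∑ R ∈ ℛ, ∑ u ∈ R, q u = (T:ℝ) := by
    rw [← hqsum, hsplitR q Finset.univ]
    exact Finset.sum_congr rfl fun R _ => by rw [Finset.univ_inter]
  have hTb : T ≤ ℬ.card := by
    have h1 : (T:ℝ) ≤ (ℬ.card : ℝ) := by
      rw [← hsumB]
      calc ∑ B ∈ ℬ, ∑ u ∈ B, q u ≤ ∑ _B ∈ ℬ, (1:ℝ) := Finset.sum_le_sum hqB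
      _ = ℬ.card := by simp
    exact_mod_cast h1
  have hTr : T ≤ ℛ.card := by
    have h1 : (T:ℝ) ≤ (ℛ.card : ℝ) := by
      rw [← hsumR]
      calc ∑ R ∈ ℛ, ∑ u ∈ R, q u ≤ ∑ _R ∈ ℛ, (1:ℝ) := Finset.sum_le_sum hqR
      _ = ℛ.card := by simp
    exact_mod_cast h1
  set n : ℕ := ℬ.card + (ℛ.card - T) with hndef
  have hnb : ℬ.card ≤ n := Nat.le_add_right _ _
  have hnr : ℛ.card ≤ n := by omega
  obtain ⟨eB⟩ : Nonempty ({x // x ∈ ℬ} ↪ Fin n) := by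
    apply Function.Embedding.nonempty_of_card_le
    simpa [Fintype.card_coe] using hnb
  obtain ⟨eR⟩ : Nonempty ({x // x ∈ ℛ} ↪ Fin n) := by
    apply Function.Embedding.nonempty_of_card_le
    simpa [Fintype.card_coe] using hnr
  set RB : Finset (Fin n) := Finset.univ.image eB with hRBdef
  set RR : Finset (Fin n) := Finset.univ.image eR with hRRdef
  have hRBcard : RB.card = ℬ.card := by
    rw [hRBdef, Finset.card_image_of_injective _ eB.injective, Finset.card_univ, Fintype.card_coe]
  have hRRcard : RR.card = ℛ.card := by
    rw [hRRdef, Finset.card_image_of_injective _ eR.injective, Finset.card_univ, Fintype.card_coe]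
  set cm : {x // x ∈ ℬ} → {x // x ∈ ℛ} → ℝ :=
    fun B R => ∑ v ∈ (B : Finset D) ∩ (R : Finset D), q v with hcmdef
  set mBf : {x // x ∈ ℬ} → ℝ := fun B => ∑ v ∈ (B : Finset D), q v with hmBdef
  set mRf : {x // x ∈ ℛ} → ℝ := fun R => ∑ v ∈ (R : Finset D), q v with hmRdef
  have hcmrow : ∀ B, ∑ R : {x // x ∈ ℛ}, cm B R = mBf B := by
    intro B
    rw [hcmdef, hmBdef]
    rw [Finset.sum_coe_sort ℛ (fun R => ∑ v ∈ (B : Finset D) ∩ R, q v)]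
    exact (hsplitR q B).symm
  have hcmcol : ∀ R, ∑ B : {x // x ∈ ℬ}, cm B R = mRf R := by
    intro R
    rw [hcmdef, hmRdef, Finset.sum_coe_sort ℬ (fun B => ∑ v ∈ B ∩ (R : Finset D), q v)]
    show ∑ B ∈ ℬ, ∑ v ∈ B ∩ (R : Finset D), q v = ∑ v ∈ (R : Finset D), q v
    rw [hsplitB q (R : Finset D)]
    exact Finset.sum_congr rfl fun B _ => by rw [Finset.inter_comm]
  have hmB1 : ∀ B, mBf B ≤ 1 := fun B => hqB B.1 B.2
  have hmR1 : ∀ R, mRf R ≤ 1 := fun R => hqR R.1 R.2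
  have hsummB : ∑ B : {x // x ∈ ℬ}, mBf B = (T:ℝ) := by
    rw [hmBdef, Finset.sum_coe_sort ℬ (fun B => ∑ v ∈ B, q v)]
    exact hsumB
  have hsummR : ∑ R : {x // x ∈ ℛ}, mRf R = (T:ℝ) := by
    rw [hmRdef, Finset.sum_coe_sort ℛ (fun R => ∑ v ∈ R, q v)]
    exact hsumR
  have hcm0 : ∀ B R, 0 ≤ cm B R := fun B R => Finset.sum_nonneg fun v _ => hq0 v
  set Mx : Matrix (Fin n) (Fin n) ℝ := fun i j =>
    (∑ B : {x // x ∈ ℬ}, ∑ R : {x // x ∈ ℛ}, if i = eB B ∧ j = eR R then cm B R else 0)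
    + (∑ B : {x // x ∈ ℬ}, if i = eB B then (1 - mBf B) / ((ℬ.card:ℝ) - T) else 0)
        * (if j ∈ RR then 0 else 1)
    + (∑ R : {x // x ∈ ℛ}, if j = eR R then (1 - mRf R) / ((ℛ.card:ℝ) - T) else 0)
        * (if i ∈ RB then 0 else 1) with hMxdef
  have hbT : (0:ℝ) ≤ (ℬ.card:ℝ) - T := by
    rw [sub_nonneg]; exact_mod_cast hTb
  have hrT : (0:ℝ) ≤ (ℛ.card:ℝ) - T := by
    rw [sub_nonneg]; exact_mod_cast hTr
  have hmemB : ∀ B, eB B ∈ RB := fun B => by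
    rw [hRBdef]; exact Finset.mem_image_of_mem eB (Finset.mem_univ B)
  have hmemR : ∀ R, eR R ∈ RR := fun R => by
    rw [hRRdef]; exact Finset.mem_image_of_mem eR (Finset.mem_univ R)
  have ME1 : ∀ B R, Mx (eB B) (eR R) = cm B R := by
    intro B R
    simp only [hMxdef]
    rw [if_pos (hmemR R), if_pos (hmemB B), mul_zero, mul_zero, add_zero, add_zero]
    rw [Finset.sum_eq_single B]
    · rw [Finset.sum_eq_single R]
      · simp
      · intro R' _ hne
        rw [if_neg]
        rintro ⟨_, h2⟩
        exact hne (eR.injective h2.symm)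
      · intro hm; exact absurd (Finset.mem_univ R) hm
    · intro B' _ hne
      apply Finset.sum_eq_zero
      intro R' _
      rw [if_neg]
      rintro ⟨h1, _⟩
      exact hne (eB.injective h1.symm)
    · intro hm; exact absurd (Finset.mem_univ B) hm
  have ME2 : ∀ i j, i ∉ RB → j ∉ RR → Mx i j = 0 := by
    intro i j hi hj
    simp only [hMxdef]
    have t1 : (∑ B : {x // x ∈ ℬ}, ∑ R : {x // x ∈ ℛ},
        if i = eB B ∧ j = eR R then cm B R else 0) = 0 := by
      apply Finset.sum_eq_zero; intro B _
      apply Finset.sum_eq_zero; intro R _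
      rw [if_neg]
      rintro ⟨h1, _⟩
      exact hi (h1 ▸ hmemB B)
    have t2 : (∑ B : {x // x ∈ ℬ},
        if i = eB B then (1 - mBf B) / ((ℬ.card:ℝ) - T) else 0) = 0 := by
      apply Finset.sum_eq_zero; intro B _
      rw [if_neg]
      intro h1
      exact hi (h1 ▸ hmemB B)
    have t3 : (∑ R : {x // x ∈ ℛ},
        if j = eR R then (1 - mRf R) / ((ℛ.card:ℝ) - T) else 0) = 0 := by
      apply Finset.sum_eq_zero; intro R _
      rw [if_neg]
      intro h1
      exact hj (h1 ▸ hmemR R)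
    rw [t1, t2, t3, zero_mul, zero_mul, add_zero, add_zero]
  have Mnn : ∀ i j, 0 ≤ Mx i j := by
    intro i j
    simp only [hMxdef]
    have n1 : (0:ℝ) ≤ ∑ B : {x // x ∈ ℬ}, ∑ R : {x // x ∈ ℛ},
        if i = eB B ∧ j = eR R then cm B R else 0 :=
      Finset.sum_nonneg fun B _ => Finset.sum_nonneg fun R _ => by
        split
        · exact hcm0 B R
        · exact le_rfl
    have n2 : (0:ℝ) ≤ (∑ B : {x // x ∈ ℬ},
        if i = eB B then (1 - mBf B) / ((ℬ.card:ℝ) - T) else 0) * (if j ∈ RR then 0 else 1) := by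
      apply mul_nonneg
      · refine Finset.sum_nonneg fun B _ => ?_
        split
        · exact div_nonneg (sub_nonneg.2 (hmB1 B)) hbT
        · exact le_rfl
      · split <;> norm_num
    have n3 : (0:ℝ) ≤ (∑ R : {x // x ∈ ℛ},
        if j = eR R then (1 - mRf R) / ((ℛ.card:ℝ) - T) else 0) * (if i ∈ RB then 0 else 1) := by
      apply mul_nonneg
      · refine Finset.sum_nonneg fun R _ => ?_
        split
        · exact div_nonneg (sub_nonneg.2 (hmR1 R)) hrT
        · exact le_rfl
      · split <;> norm_num
    linarith
  have hcastn : (n:ℝ) = (ℬ.card:ℝ) + ((ℛ.card:ℝ) - (T:ℝ)) := by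
    rw [hndef]
    push_cast [Nat.cast_sub hTr]
    ring
  have htightB : (ℬ.card:ℝ) - T = 0 → ∀ B : {x // x ∈ ℬ}, mBf B = 1 := by
    intro h0 B
    have hsum0 : ∑ B : {x // x ∈ ℬ}, (1 - mBf B) = 0 := by
      rw [Finset.sum_sub_distrib, hsummB, Finset.sum_const, Finset.card_univ, Fintype.card_coe,
        nsmul_eq_mul, mul_one]
      linarith
    have := (Finset.sum_eq_zero_iff_of_nonneg
      (fun B _ => sub_nonneg.2 (hmB1 B))).1 hsum0 B (Finset.mem_univ B)
    linarith
  have htightR : (ℛ.card:ℝ) - T = 0 → ∀ R : {x // x ∈ ℛ}, mRf R = 1 := by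
    intro h0 R
    have hsum0 : ∑ R : {x // x ∈ ℛ}, (1 - mRf R) = 0 := by
      rw [Finset.sum_sub_distrib, hsummR, Finset.sum_const, Finset.card_univ, Fintype.card_coe,
        nsmul_eq_mul, mul_one]
      linarith
    have := (Finset.sum_eq_zero_iff_of_nonneg
      (fun R _ => sub_nonneg.2 (hmR1 R))).1 hsum0 R (Finset.mem_univ R)
    linarith
  have hcolind : ∑ j : Fin n, (if j ∈ RR then (0:ℝ) else 1) = (n:ℝ) - ℛ.card := by
    have e1 : ∀ j : Fin n, (if j ∈ RR then (0:ℝ) else 1) = if j ∉ RR then 1 else 0 :=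
      fun j => by by_cases h : j ∈ RR <;> simp [h]
    rw [Finset.sum_congr rfl fun j _ => e1 j, Finset.sum_boole, Finset.filter_not,
      Finset.filter_univ_mem, Finset.card_sdiff_of_subset (Finset.subset_univ RR), Finset.card_univ,
      Fintype.card_fin, hRRcard, Nat.cast_sub hnr]
  have hrowind : ∑ i : Fin n, (if i ∈ RB then (0:ℝ) else 1) = (n:ℝ) - ℬ.card := by
    have e1 : ∀ i : Fin n, (if i ∈ RB then (0:ℝ) else 1) = if i ∉ RB then 1 else 0 :=
      fun i => by by_cases h : i ∈ RB <;> simp [h]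
    rw [Finset.sum_congr rfl fun i _ => e1 i, Finset.sum_boole, Finset.filter_not,
      Finset.filter_univ_mem, Finset.card_sdiff_of_subset (Finset.subset_univ RB), Finset.card_univ,
      Fintype.card_fin, hRBcard, Nat.cast_sub hnb]
  have hrow : ∀ i, ∑ j, Mx i j = 1 := by
    intro i
    simp only [hMxdef]
    rw [Finset.sum_add_distrib, Finset.sum_add_distrib]
    have T1 : (∑ j : Fin n, ∑ B : {x // x ∈ ℬ}, ∑ R : {x // x ∈ ℛ},
        if i = eB B ∧ j = eR R then cm B R else 0)
        = ∑ B : {x // x ∈ ℬ}, if i = eB B then mBf B else 0 := by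
      rw [Finset.sum_comm]
      refine Finset.sum_congr rfl fun B _ => ?_
      rw [Finset.sum_comm]
      rw [Finset.sum_congr rfl (fun R _ => sum_ite_and_eq (i = eB B) (eR R) (cm B R)),
        ite_sum_comm, hcmrow B]
    have T2 : (∑ j : Fin n, (∑ B : {x // x ∈ ℬ},
        if i = eB B then (1 - mBf B) / ((ℬ.card:ℝ) - T) else 0) * (if j ∈ RR then 0 else 1))
        = (∑ B : {x // x ∈ ℬ}, if i = eB B then (1 - mBf B) / ((ℬ.card:ℝ) - T) else 0)
          * ((n:ℝ) - ℛ.card) := by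
      rw [← Finset.mul_sum, hcolind]
    have T3 : (∑ j : Fin n, (∑ R : {x // x ∈ ℛ},
        if j = eR R then (1 - mRf R) / ((ℛ.card:ℝ) - T) else 0) * (if i ∈ RB then 0 else 1))
        = (∑ R : {x // x ∈ ℛ}, (1 - mRf R) / ((ℛ.card:ℝ) - T)) * (if i ∈ RB then 0 else 1) := by
      rw [← Finset.sum_mul]
      congr 1
      rw [Finset.sum_comm]
      refine Finset.sum_congr rfl fun R _ => ?_
      simp
    rw [T1, T2, T3]
    by_cases hi : i ∈ RB
    · obtain ⟨B0, _, hB0⟩ := Finset.mem_image.1 (hRBdef ▸ hi)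
      have e1 : (∑ B : {x // x ∈ ℬ}, if i = eB B then mBf B else 0) = mBf B0 := by
        rw [Finset.sum_eq_single B0]
        · rw [if_pos hB0.symm]
        · intro B' _ hne
          rw [if_neg]
          intro h1
          exact hne (eB.injective (hB0.trans h1).symm)
        · intro hm; exact absurd (Finset.mem_univ B0) hm
      have e2 : (∑ B : {x // x ∈ ℬ}, if i = eB B then (1 - mBf B) / ((ℬ.card:ℝ) - T) else 0)
          = (1 - mBf B0) / ((ℬ.card:ℝ) - T) := by
        rw [Finset.sum_eq_single B0]
        · rw [if_pos hB0.symm]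
        · intro B' _ hne
          rw [if_neg]
          intro h1
          exact hne (eB.injective (hB0.trans h1).symm)
        · intro hm; exact absurd (Finset.mem_univ B0) hm
      rw [e1, e2, if_pos hi, mul_zero, add_zero]
      have hnr2 : (n:ℝ) - ℛ.card = (ℬ.card:ℝ) - T := by rw [hcastn]; ring
      rw [hnr2]
      by_cases hbz : (ℬ.card:ℝ) - T = 0
      · rw [htightB hbz B0, hbz, mul_zero, add_zero]
      · rw [div_mul_cancel₀ _ hbz]
        ring
    · have e1 : (∑ B : {x // x ∈ ℬ}, if i = eB B then mBf B else 0) = 0 := by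
        apply Finset.sum_eq_zero
        intro B _
        rw [if_neg]
        intro h1
        exact hi (h1 ▸ hmemB B)
      have e2 : (∑ B : {x // x ∈ ℬ}, if i = eB B then (1 - mBf B) / ((ℬ.card:ℝ) - T) else 0)
          = 0 := by
        apply Finset.sum_eq_zero
        intro B _
        rw [if_neg]
        intro h1
        exact hi (h1 ▸ hmemB B)
      have hblt : ℬ.card < n := by
        have hssub : RB ⊂ Finset.univ :=
          Finset.ssubset_univ_iff.2 (fun h => hi (h ▸ Finset.mem_univ i))
        have := Finset.card_lt_card hssub
        rwa [hRBcard, Finset.card_univ, Fintype.card_fin] at this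
      have hTrlt : T < ℛ.card := by omega
      have hrz : (ℛ.card:ℝ) - T ≠ 0 := by
        have : (T:ℝ) < ℛ.card := by exact_mod_cast hTrlt
        intro hcon
        linarith
      have e3 : (∑ R : {x // x ∈ ℛ}, (1 - mRf R) / ((ℛ.card:ℝ) - T)) = 1 := by
        rw [← Finset.sum_div, Finset.sum_sub_distrib, hsummR, Finset.sum_const,
          Finset.card_univ, Fintype.card_coe, nsmul_eq_mul, mul_one, div_self hrz]
      rw [e1, e2, e3, if_neg hi]
      norm_num
  have hcol : ∀ j, ∑ i, Mx i j = 1 := by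
    intro j
    simp only [hMxdef]
    rw [Finset.sum_add_distrib, Finset.sum_add_distrib]
    have T1 : (∑ i : Fin n, ∑ B : {x // x ∈ ℬ}, ∑ R : {x // x ∈ ℛ},
        if i = eB B ∧ j = eR R then cm B R else 0)
        = ∑ R : {x // x ∈ ℛ}, if j = eR R then mRf R else 0 := by
      calc (∑ i : Fin n, ∑ B : {x // x ∈ ℬ}, ∑ R : {x // x ∈ ℛ},
              if i = eB B ∧ j = eR R then cm B R else 0)
          = ∑ B : {x // x ∈ ℬ}, ∑ i : Fin n, ∑ R : {x // x ∈ ℛ},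
              if i = eB B ∧ j = eR R then cm B R else 0 := Finset.sum_comm
        _ = ∑ B : {x // x ∈ ℬ}, ∑ R : {x // x ∈ ℛ}, ∑ i : Fin n,
              if i = eB B ∧ j = eR R then cm B R else 0 :=
            Finset.sum_congr rfl fun B _ => Finset.sum_comm
        _ = ∑ B : {x // x ∈ ℬ}, ∑ R : {x // x ∈ ℛ}, (if j = eR R then cm B R else 0) :=
            Finset.sum_congr rfl fun B _ => Finset.sum_congr rfl fun R _ =>
              sum_ite_and_eq' (j = eR R) (eB B) (cm B R)
        _ = ∑ R : {x // x ∈ ℛ}, ∑ B : {x // x ∈ ℬ}, (if j = eR R then cm B R else 0) :=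
            Finset.sum_comm
        _ = ∑ R : {x // x ∈ ℛ}, if j = eR R then mRf R else 0 := by
            refine Finset.sum_congr rfl fun R _ => ?_
            rw [ite_sum_comm, hcmcol R]
    have T2 : (∑ i : Fin n, (∑ B : {x // x ∈ ℬ},
        if i = eB B then (1 - mBf B) / ((ℬ.card:ℝ) - T) else 0) * (if j ∈ RR then 0 else 1))
        = (∑ B : {x // x ∈ ℬ}, (1 - mBf B) / ((ℬ.card:ℝ) - T)) * (if j ∈ RR then 0 else 1) := by
      rw [← Finset.sum_mul]
      congr 1
      rw [Finset.sum_comm]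
      refine Finset.sum_congr rfl fun B _ => ?_
      simp
    have T3 : (∑ i : Fin n, (∑ R : {x // x ∈ ℛ},
        if j = eR R then (1 - mRf R) / ((ℛ.card:ℝ) - T) else 0) * (if i ∈ RB then 0 else 1))
        = (∑ R : {x // x ∈ ℛ}, if j = eR R then (1 - mRf R) / ((ℛ.card:ℝ) - T) else 0)
          * ((n:ℝ) - ℬ.card) := by
      rw [← Finset.mul_sum, hrowind]
    rw [T1, T2, T3]
    by_cases hj : j ∈ RR
    · obtain ⟨R0, _, hR0⟩ := Finset.mem_image.1 (hRRdef ▸ hj)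
      have e1 : (∑ R : {x // x ∈ ℛ}, if j = eR R then mRf R else 0) = mRf R0 := by
        rw [Finset.sum_eq_single R0]
        · rw [if_pos hR0.symm]
        · intro R' _ hne
          rw [if_neg]
          intro h1
          exact hne (eR.injective (hR0.trans h1).symm)
        · intro hm; exact absurd (Finset.mem_univ R0) hm
      have e2 : (∑ R : {x // x ∈ ℛ}, if j = eR R then (1 - mRf R) / ((ℛ.card:ℝ) - T) else 0)
          = (1 - mRf R0) / ((ℛ.card:ℝ) - T) := by
        rw [Finset.sum_eq_single R0]
        · rw [if_pos hR0.symm]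
        · intro R' _ hne
          rw [if_neg]
          intro h1
          exact hne (eR.injective (hR0.trans h1).symm)
        · intro hm; exact absurd (Finset.mem_univ R0) hm
      rw [e1, e2, if_pos hj, mul_zero, add_zero]
      have hnb2 : (n:ℝ) - ℬ.card = (ℛ.card:ℝ) - T := by rw [hcastn]; ring
      rw [hnb2]
      by_cases hrz : (ℛ.card:ℝ) - T = 0
      · rw [htightR hrz R0, hrz, mul_zero, add_zero]
      · rw [div_mul_cancel₀ _ hrz]
        ring
    · have e1 : (∑ R : {x // x ∈ ℛ}, if j = eR R then mRf R else 0) = 0 := by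
        apply Finset.sum_eq_zero
        intro R _
        rw [if_neg]
        intro h1
        exact hj (h1 ▸ hmemR R)
      have e2 : (∑ R : {x // x ∈ ℛ}, if j = eR R then (1 - mRf R) / ((ℛ.card:ℝ) - T) else 0)
          = 0 := by
        apply Finset.sum_eq_zero
        intro R _
        rw [if_neg]
        intro h1
        exact hj (h1 ▸ hmemR R)
      have hrlt : ℛ.card < n := by
        have hssub : RR ⊂ Finset.univ :=
          Finset.ssubset_univ_iff.2 (fun h => hj (h ▸ Finset.mem_univ j))
        have := Finset.card_lt_card hssub
        rwa [hRRcard, Finset.card_univ, Fintype.card_fin] at this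
      have hTblt : T < ℬ.card := by omega
      have hbz : (ℬ.card:ℝ) - T ≠ 0 := by
        have : (T:ℝ) < ℬ.card := by exact_mod_cast hTblt
        intro hcon
        linarith
      have e3 : (∑ B : {x // x ∈ ℬ}, (1 - mBf B) / ((ℬ.card:ℝ) - T)) = 1 := by
        rw [← Finset.sum_div, Finset.sum_sub_distrib, hsummB, Finset.sum_const,
          Finset.card_univ, Fintype.card_coe, nsmul_eq_mul, mul_one, div_self hbz]
      rw [e1, e2, e3, if_neg hj]
      norm_num
  have hMmem : Mx ∈ doublyStochastic ℝ (Fin n) :=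
    mem_doublyStochastic_iff_sum.2 ⟨Mnn, hrow, hcol⟩
  obtain ⟨c, hc0, hc1, hcM⟩ := exists_eq_sum_perm_of_mem_doublyStochastic hMmem
  have hMentry : ∀ i j, Mx i j
      = ∑ σ : Equiv.Perm (Fin n), c σ * (if σ i = j then 1 else 0) := by
    intro i j
    have hcE := congrFun (congrFun hcM i) j
    rw [← hcE, Matrix.sum_apply]
    refine Finset.sum_congr rfl fun σ _ => ?_
    rw [Matrix.smul_apply, smul_eq_mul]
    congr 1
    simp [Equiv.Perm.permMatrix, PEquiv.toMatrix_apply, Equiv.toPEquiv_apply,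
      Option.mem_some_iff]
  have hle : ∀ (σ : Equiv.Perm (Fin n)) (i : Fin n), c σ ≤ Mx i (σ i) := by
    intro σ i
    rw [hMentry i (σ i)]
    have h1 : ∀ σ' : Equiv.Perm (Fin n), σ' ∈ Finset.univ →
        0 ≤ c σ' * (if σ' i = σ i then (1:ℝ) else 0) :=
      fun σ' _ => mul_nonneg (hc0 σ') (by split <;> norm_num)
    have h2 := Finset.single_le_sum h1 (Finset.mem_univ σ)
    simpa using h2
  have hRsubne : Nonempty {x // x ∈ ℛ} := ⟨⟨fR (Classical.arbitrary D), hfR1 _⟩⟩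
  set theR : Equiv.Perm (Fin n) → {x // x ∈ ℬ} → {x // x ∈ ℛ} := fun σ B =>
    if h : ∃ R : {x // x ∈ ℛ}, eR R = σ (eB B) then h.choose
    else Classical.arbitrary _ with htheRdef
  have htheR : ∀ σ B, σ (eB B) ∈ RR → eR (theR σ B) = σ (eB B) := by
    intro σ B hmem
    have h : ∃ R : {x // x ∈ ℛ}, eR R = σ (eB B) := by
      rw [hRRdef] at hmem
      obtain ⟨R, _, hR⟩ := Finset.mem_image.1 hmem
      exact ⟨R, hR⟩
    rw [htheRdef]
    simp only [dif_pos h]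
    exact h.choose_spec
  set Pf : Equiv.Perm (Fin n) → Finset {x // x ∈ ℬ} :=
    fun σ => Finset.univ.filter (fun B => σ (eB B) ∈ RR) with hPfdef
  set Cf : Equiv.Perm (Fin n) → Finset (Finset D) :=
    fun σ => (Pf σ).image (fun B : {x // x ∈ ℬ} => (↑B : Finset D) ∩ ((theR σ B : {x // x ∈ ℛ}) : Finset D)) with hCfdef
  set Pos : D → Prop := fun u => 0 < q u with hPosdef
  set qm : D → ℝ := fun u => ∑ v ∈ fB u ∩ fR u, q v with hqmdef
  set Bu : D → {x // x ∈ ℬ} := fun u => ⟨fB u, hfB1 u⟩ with hBudef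
  set Ru : D → {x // x ∈ ℛ} := fun u => ⟨fR u, hfR1 u⟩ with hRudef
  set w : Finset D → ℝ := fun S => ∑ σ : Equiv.Perm (Fin n),
    c σ * (if TransSet Pos (Cf σ) S then ∏ v ∈ S, q v / qm v else 0) with hwdef
  -- cell structure facts
  have hcell : ∀ σ, ∀ C ∈ Cf σ, ∃ B : {x // x ∈ ℬ}, B ∈ Pf σ ∧ C = (↑B : Finset D) ∩ ((theR σ B : {x // x ∈ ℛ}) : Finset D) := by
    intro σ C hC
    obtain ⟨B, hBm, hBe⟩ := Finset.mem_image.1 hC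
    exact ⟨B, hBm, hBe.symm⟩
  have hqmC : ∀ (σ : Equiv.Perm (Fin n)) (B : {x // x ∈ ℬ}),
      ∀ u ∈ (B : Finset D) ∩ (theR σ B : Finset D), qm u = cm B (theR σ B) := by
    intro σ B u hu
    obtain ⟨hu1, hu2⟩ := Finset.mem_inter.1 hu
    have e1 : (B : Finset D) = fB u := hfBuniq u _ B.2 hu1
    have e2 : ((theR σ B : {x // x ∈ ℛ}) : Finset D) = fR u := hfRuniq u _ (theR σ B).2 hu2
    rw [hqmdef, hcmdef]
    simp only [← e1, ← e2]
  have hCd : ∀ σ, ((Cf σ : Set (Finset D))).Pairwise (fun C C' => Disjoint C C') := by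
    intro σ C hC C' hC' hne
    obtain ⟨B, hBm, hBe⟩ := hcell σ C hC
    obtain ⟨B', hBm', hBe'⟩ := hcell σ C' hC'
    have hBne : (B : Finset D) ≠ (B' : Finset D) := by
      intro hEq
      exact hne (by rw [hBe, hBe', Subtype.coe_injective hEq])
    rw [hBe, hBe']
    exact (hBdisj _ _ B.2 B'.2 hBne).mono Finset.inter_subset_left Finset.inter_subset_left
  -- facts requiring positivity of c σ
  have g2 : ∀ σ : Equiv.Perm (Fin n), 0 < c σ → ∀ B ∈ Pf σ, 0 < cm B (theR σ B) := by
    intro σ hσ B hBm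
    have hmem : σ (eB B) ∈ RR := (Finset.mem_filter.1 hBm).2
    calc (0:ℝ) < c σ := hσ
    _ ≤ Mx (eB B) (σ (eB B)) := hle σ (eB B)
    _ = Mx (eB B) (eR (theR σ B)) := by rw [htheR σ B hmem]
    _ = cm B (theR σ B) := ME1 _ _
  have g5 : ∀ σ : Equiv.Perm (Fin n), 0 < c σ → ∀ C ∈ Cf σ,
      (∑ v ∈ C, if Pos v then q v / qm v else 0) = 1 := by
    intro σ hσ C hC
    obtain ⟨B, hBm, rfl⟩ := hcell σ C hC
    have hcmpos := g2 σ hσ B hBm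
    have key : ∀ v ∈ (↑B : Finset D) ∩ ((theR σ B : {x // x ∈ ℛ}) : Finset D),
        (if Pos v then q v / qm v else 0) = q v / cm B (theR σ B) := by
      intro v hv
      rw [hqmC σ B v hv]
      by_cases hPv : Pos v
      · rw [if_pos hPv]
      · rw [if_neg hPv]
        simp only [hPosdef] at hPv
        have : q v = 0 := le_antisymm (not_lt.1 hPv) (hq0 v)
        rw [this, zero_div]
    rw [Finset.sum_congr rfl key, ← Finset.sum_div]
    have : (∑ v ∈ (↑B : Finset D) ∩ ((theR σ B : {x // x ∈ ℛ}) : Finset D), q v)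
        = cm B (theR σ B) := rfl
    rw [this, div_self (ne_of_gt hcmpos)]
  have g6 : ∀ σ : Equiv.Perm (Fin n), 0 < c σ →
      (∑ S : Finset D, if TransSet Pos (Cf σ) S then ∏ v ∈ S, q v / qm v else 0) = 1 := by
    intro σ hσ
    rw [transSet_sum (fun v => q v / qm v) Pos (Cf σ) (hCd σ)]
    exact Finset.prod_eq_one (g5 σ hσ)
  have hPcard : ∀ σ : Equiv.Perm (Fin n), 0 < c σ → (Pf σ).card = T := by
    intro σ hσ
    have g1 : ∀ i : Fin n, i ∉ RB → σ i ∈ RR := by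
      intro i hi
      by_contra hcon
      have h1 := hle σ i
      rw [ME2 i (σ i) hi hcon] at h1
      linarith
    set A : Finset (Fin n) := Finset.univ.filter (fun i => σ i ∈ RR) with hAdef
    have hAcard : A.card = ℛ.card := by
      have himg : A.image σ = RR := by
        ext j
        simp only [hAdef, Finset.mem_image, Finset.mem_filter, Finset.mem_univ, true_and]
        constructor
        · rintro ⟨i, h1, rfl⟩; exact h1
        · intro hj; exact ⟨σ.symm j, by simpa using hj, by simp⟩
      rw [← hRRcard, ← himg, Finset.card_image_of_injective _ σ.injective]
    have hsd : A \ RB = Finset.univ \ RB := by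
      ext i
      simp only [Finset.mem_sdiff, hAdef, Finset.mem_filter, Finset.mem_univ, true_and]
      exact ⟨fun h => h.2, fun h => ⟨g1 i h, h⟩⟩
    have hcards := Finset.card_inter_add_card_sdiff A RB
    rw [hsd, Finset.card_sdiff_of_subset (Finset.subset_univ RB), Finset.card_univ, Fintype.card_fin,
      hRBcard, hAcard] at hcards
    have himg2 : (Pf σ).image (fun B => eB B) = A ∩ RB := by
      ext i
      simp only [Finset.mem_image, hPfdef, Finset.mem_filter, Finset.mem_univ, true_and,
        Finset.mem_inter, hAdef]
      constructor
      · rintro ⟨B, h1, rfl⟩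
        exact ⟨h1, hmemB B⟩
      · rintro ⟨h1, h2⟩
        rw [hRBdef] at h2
        obtain ⟨B, _, rfl⟩ := Finset.mem_image.1 h2
        exact ⟨B, h1, rfl⟩
    have hPA : (Pf σ).card = (A ∩ RB).card := by
      rw [← himg2, Finset.card_image_of_injective _ eB.injective]
    omega
  have g7 : ∀ σ : Equiv.Perm (Fin n), 0 < c σ → (Cf σ).card = T := by
    intro σ hσ
    have hinj : Set.InjOn (fun B : {x // x ∈ ℬ} =>
        (↑B : Finset D) ∩ ((theR σ B : {x // x ∈ ℛ}) : Finset D)) (Pf σ) := by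
      intro B hBm B' hBm' hEq
      have hBm2 : B ∈ Pf σ := hBm
      have hBm2' : B' ∈ Pf σ := hBm'
      have h1 := g2 σ hσ B hBm2
      have hne : ((↑B : Finset D) ∩ ((theR σ B : {x // x ∈ ℛ}) : Finset D)).Nonempty := by
        by_contra hcon
        rw [Finset.not_nonempty_iff_eq_empty] at hcon
        have hz : cm B (theR σ B)
            = ∑ v ∈ (↑B : Finset D) ∩ ((theR σ B : {x // x ∈ ℛ}) : Finset D), q v := rfl
        rw [hz, hcon, Finset.sum_empty] at h1
        exact lt_irrefl _ h1
      obtain ⟨u, hu⟩ := hne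
      have hEq' : (↑B : Finset D) ∩ ((theR σ B : {x // x ∈ ℛ}) : Finset D)
          = (↑B' : Finset D) ∩ ((theR σ B' : {x // x ∈ ℛ}) : Finset D) := hEq
      have hu' : u ∈ (↑B' : Finset D) ∩ ((theR σ B' : {x // x ∈ ℛ}) : Finset D) := hEq' ▸ hu
      apply Subtype.ext
      exact (hfBuniq u ↑B B.2 (Finset.mem_inter.1 hu).1).trans
        (hfBuniq u ↑B' B'.2 (Finset.mem_inter.1 hu').1).symm
    rw [hCfdef]
    rw [Finset.card_image_of_injOn hinj, hPcard σ hσ]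
  have g8 : ∀ σ : Equiv.Perm (Fin n), 0 < c σ → ∀ S : Finset D, TransSet Pos (Cf σ) S →
      S.card = T ∧ (∀ B ∈ ℬ, (S ∩ B).card ≤ 1) ∧ (∀ R ∈ ℛ, (S ∩ R).card ≤ 1) := by
    intro σ hσ S hTS
    obtain ⟨hT1, hT2⟩ := hTS
    refine ⟨?_, ?_, ?_⟩
    · have hSb : S = (Cf σ).biUnion (fun C => S ∩ C) := by
        ext u
        simp only [Finset.mem_biUnion, Finset.mem_inter]
        constructor
        · intro hu
          obtain ⟨_, C, hC, huC⟩ := hT1 u hu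
          exact ⟨C, hC, hu, huC⟩
        · rintro ⟨C, _, hu, _⟩; exact hu
      rw [hSb, Finset.card_biUnion (fun x hx y hy hne =>
        (hCd σ (Finset.mem_coe.2 hx) (Finset.mem_coe.2 hy) hne).mono
          Finset.inter_subset_right Finset.inter_subset_right)]
      have hone : ∀ C ∈ Cf σ, (S ∩ C).card = 1 := by
        intro C hC
        obtain ⟨u0, hu0, huniq⟩ := hT2 C hC
        rw [Finset.card_eq_one]
        refine ⟨u0, ?_⟩
        ext v
        simp only [Finset.mem_inter, Finset.mem_singleton]
        constructor
        · intro hv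
          exact huniq v hv
        · intro hv
          rw [hv]
          exact hu0
      calc ∑ C ∈ Cf σ, (S ∩ C).card = ∑ C ∈ Cf σ, 1 := Finset.sum_congr rfl hone
        _ = (Cf σ).card := by rw [Finset.sum_const, smul_eq_mul, mul_one]
        _ = T := g7 σ hσ
    · intro B hBmem
      rw [Finset.card_le_one]
      intro u hu v hv
      obtain ⟨huS, huB⟩ := Finset.mem_inter.1 hu
      obtain ⟨hvS, hvB⟩ := Finset.mem_inter.1 hv
      obtain ⟨_, C, hC, huC⟩ := hT1 u huS
      obtain ⟨_, C', hC', hvC⟩ := hT1 v hvS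
      obtain ⟨B1, hB1m, rfl⟩ := hcell σ C hC
      obtain ⟨B1', hB1m', rfl⟩ := hcell σ C' hC'
      have e1 : (B1 : Finset D) = B :=
        ((hfBuniq u ↑B1 B1.2 (Finset.mem_inter.1 huC).1).trans
          (hfBuniq u B hBmem huB).symm)
      have e1' : (B1' : Finset D) = B :=
        ((hfBuniq v ↑B1' B1'.2 (Finset.mem_inter.1 hvC).1).trans
          (hfBuniq v B hBmem hvB).symm)
      have hBB : B1 = B1' := Subtype.ext (e1.trans e1'.symm)
      subst hBB
      obtain ⟨u0, _, huniq⟩ := hT2 _ hC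
      exact (huniq u ⟨huS, huC⟩).trans (huniq v ⟨hvS, hvC⟩).symm
    · intro R hRmem
      rw [Finset.card_le_one]
      intro u hu v hv
      obtain ⟨huS, huR⟩ := Finset.mem_inter.1 hu
      obtain ⟨hvS, hvR⟩ := Finset.mem_inter.1 hv
      obtain ⟨_, C, hC, huC⟩ := hT1 u huS
      obtain ⟨_, C', hC', hvC⟩ := hT1 v hvS
      obtain ⟨B1, hB1m, rfl⟩ := hcell σ C hC
      obtain ⟨B1', hB1m', rfl⟩ := hcell σ C' hC'
      have e1 : ((theR σ B1 : {x // x ∈ ℛ}) : Finset D) = R :=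
        ((hfRuniq u _ (theR σ B1).2 (Finset.mem_inter.1 huC).2).trans
          (hfRuniq u R hRmem huR).symm)
      have e1' : ((theR σ B1' : {x // x ∈ ℛ}) : Finset D) = R :=
        ((hfRuniq v _ (theR σ B1').2 (Finset.mem_inter.1 hvC).2).trans
          (hfRuniq v R hRmem hvR).symm)
      have hth : theR σ B1 = theR σ B1' := Subtype.ext (e1.trans e1'.symm)
      have hm1 : σ (eB B1) ∈ RR := (Finset.mem_filter.1 hB1m).2
      have hm1' : σ (eB B1') ∈ RR := (Finset.mem_filter.1 hB1m').2
      have hσeq : σ (eB B1) = σ (eB B1') := by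
        rw [← htheR σ B1 hm1, ← htheR σ B1' hm1', hth]
      have hBB : B1 = B1' := eB.injective (σ.injective hσeq)
      subst hBB
      obtain ⟨u0, _, huniq⟩ := hT2 _ hC
      exact (huniq u ⟨huS, huC⟩).trans (huniq v ⟨hvS, hvC⟩).symm
  have g9 : ∀ σ : Equiv.Perm (Fin n), 0 < c σ → ∀ u : D,
      (∑ S : Finset D, if u ∈ S then
          (if TransSet Pos (Cf σ) S then ∏ v ∈ S, q v / qm v else 0) else 0)
        = if (0 < q u ∧ σ (eB (Bu u)) = eR (Ru u)) then q u / qm u else 0 := by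
    intro σ hσ u
    have hmerge : ∀ S : Finset D, (if u ∈ S then
        (if TransSet Pos (Cf σ) S then ∏ v ∈ S, q v / qm v else 0) else 0)
        = if TransSet Pos (Cf σ) S ∧ u ∈ S then ∏ v ∈ S, q v / qm v else 0 := by
      intro S
      by_cases h1 : u ∈ S <;> by_cases h2 : TransSet Pos (Cf σ) S <;> simp [h1, h2]
    rw [Finset.sum_congr rfl fun S _ => hmerge S]
    by_cases hcond : 0 < q u ∧ σ (eB (Bu u)) = eR (Ru u)
    · obtain ⟨hqu, hmatch⟩ := hcond
      have hmem : σ (eB (Bu u)) ∈ RR := by rw [hmatch]; exact hmemR (Ru u)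
      have hBuP : Bu u ∈ Pf σ := by
        rw [hPfdef]; exact Finset.mem_filter.2 ⟨Finset.mem_univ _, hmem⟩
      have hth : theR σ (Bu u) = Ru u :=
        eR.injective (by rw [htheR σ (Bu u) hmem, hmatch])
      have hC0 : (((Bu u : {x // x ∈ ℬ}) : Finset D) ∩ ((Ru u : {x // x ∈ ℛ}) : Finset D))
          ∈ Cf σ := by
        rw [hCfdef]
        exact Finset.mem_image.2 ⟨Bu u, hBuP, by rw [hth]⟩
      have huC0 : u ∈ ((Bu u : {x // x ∈ ℬ}) : Finset D) ∩ ((Ru u : {x // x ∈ ℛ}) : Finset D) := by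
        refine Finset.mem_inter.2 ⟨?_, ?_⟩
        · exact hfB2 u
        · exact hfR2 u
      have hPosu : Pos u := by simp only [hPosdef]; exact hqu
      rw [transSet_sum_mem (fun v => q v / qm v) Pos (Cf σ) (hCd σ) hC0 huC0 hPosu]
      rw [transSet_sum (fun v => q v / qm v) Pos (((Cf σ)).erase _)
        ((hCd σ).mono (Finset.coe_subset.2 (Finset.erase_subset _ _)))]
      rw [Finset.prod_eq_one (fun C hC => g5 σ hσ C (Finset.mem_of_mem_erase hC)), mul_one,
        if_pos ⟨hqu, hmatch⟩]
    · rw [if_neg hcond]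
      apply Finset.sum_eq_zero
      intro S _
      rw [if_neg]
      rintro ⟨hTS, huS⟩
      apply hcond
      obtain ⟨hPosu, C, hC, huC⟩ := hTS.1 u huS
      obtain ⟨B1, hB1m, rfl⟩ := hcell σ C hC
      have hqu : 0 < q u := by simpa [hPosdef] using hPosu
      have e1 : B1 = Bu u :=
        Subtype.ext (hfBuniq u ↑B1 B1.2 (Finset.mem_inter.1 huC).1)
      have e2 : theR σ B1 = Ru u :=
        Subtype.ext (hfRuniq u _ (theR σ B1).2 (Finset.mem_inter.1 huC).2)
      have hm1 : σ (eB B1) ∈ RR := (Finset.mem_filter.1 hB1m).2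
      refine ⟨hqu, ?_⟩
      rw [← e1, ← e2]
      exact (htheR σ B1 hm1).symm
  -- assembling
  have hw0 : ∀ S, 0 ≤ w S := by
    intro S
    apply Finset.sum_nonneg
    intro σ _
    apply mul_nonneg (hc0 σ)
    split
    · exact Finset.prod_nonneg fun v _ => div_nonneg (hq0 v)
        (Finset.sum_nonneg fun x _ => hq0 x)
    · exact le_rfl
  have hw1 : (∑ S : Finset D, w S) = 1 := by
    rw [hwdef]
    rw [Finset.sum_comm]
    calc (∑ σ : Equiv.Perm (Fin n), ∑ S : Finset D,
          c σ * (if TransSet Pos (Cf σ) S then ∏ v ∈ S, q v / qm v else 0))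
        = ∑ σ : Equiv.Perm (Fin n), c σ := by
          refine Finset.sum_congr rfl fun σ _ => ?_
          rw [← Finset.mul_sum]
          rcases (hc0 σ).eq_or_lt with h | h
          · rw [← h, zero_mul]
          · rw [g6 σ h, mul_one]
      _ = 1 := hc1
  have hsupp : ∀ S : Finset D, w S ≠ 0 →
      S.card = T ∧ (∀ B ∈ ℬ, (S ∩ B).card ≤ 1) ∧ (∀ R ∈ ℛ, (S ∩ R).card ≤ 1) := by
    intro S hS
    obtain ⟨σ, _, hne⟩ := Finset.exists_ne_zero_of_sum_ne_zero hS
    have hcne := mul_ne_zero_iff.1 hne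
    have hcσ : 0 < c σ := (hc0 σ).lt_of_ne (Ne.symm hcne.1)
    have hTS : TransSet Pos (Cf σ) S := by
      by_contra hcon
      exact hcne.2 (if_neg hcon)
    exact g8 σ hcσ S hTS
  have hmarg : ∀ u : D,
      (∑ S ∈ Finset.univ.filter (fun S : Finset D => u ∈ S), w S) = T * p u := by
    intro u
    rw [Finset.sum_filter]
    have hstep : ∀ S : Finset D, (if u ∈ S then w S else 0)
        = ∑ σ : Equiv.Perm (Fin n), c σ * (if u ∈ S then
            (if TransSet Pos (Cf σ) S then ∏ v ∈ S, q v / qm v else 0) else 0) := by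
      intro S
      by_cases h1 : u ∈ S
      · simp only [h1, if_true, hwdef]
      · simp only [h1, if_false, mul_zero, Finset.sum_const_zero]
    rw [Finset.sum_congr rfl fun S _ => hstep S, Finset.sum_comm]
    by_cases hqu : 0 < q u
    · have hqq : ∀ σ : Equiv.Perm (Fin n),
          (∑ S : Finset D, c σ * (if u ∈ S then
            (if TransSet Pos (Cf σ) S then ∏ v ∈ S, q v / qm v else 0) else 0))
          = (q u / qm u) * (c σ * (if σ (eB (Bu u)) = eR (Ru u) then 1 else 0)) := by
        intro σ
        rw [← Finset.mul_sum]
        rcases (hc0 σ).eq_or_lt with h | h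
        · rw [← h]; ring
        · rw [g9 σ h u]
          by_cases hm : σ (eB (Bu u)) = eR (Ru u)
          · rw [if_pos ⟨hqu, hm⟩, if_pos hm]; ring
          · rw [if_neg (fun hcon => hm hcon.2), if_neg hm]; ring
      rw [Finset.sum_congr rfl fun σ _ => hqq σ, ← Finset.mul_sum,
        ← hMentry (eB (Bu u)) (eR (Ru u)), ME1]
      have hqmu : qm u = cm (Bu u) (Ru u) := rfl
      have hqmpos : 0 < cm (Bu u) (Ru u) := by
        calc (0:ℝ) < q u := hqu
        _ ≤ cm (Bu u) (Ru u) := by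
          have hcc : cm (Bu u) (Ru u) = ∑ v ∈ fB u ∩ fR u, q v := rfl
          rw [hcc]
          exact Finset.single_le_sum (fun v _ => hq0 v)
            (Finset.mem_inter.2 ⟨hfB2 u, hfR2 u⟩)
      rw [← hqmu, div_mul_cancel₀ _ (by rw [hqmu]; exact ne_of_gt hqmpos)]
    · have hq00 : q u = 0 := le_antisymm (not_lt.1 hqu) (hq0 u)
      have hzero : ∀ σ : Equiv.Perm (Fin n),
          (∑ S : Finset D, c σ * (if u ∈ S then
            (if TransSet Pos (Cf σ) S then ∏ v ∈ S, q v / qm v else 0) else 0)) = 0 := by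
        intro σ
        apply Finset.sum_eq_zero
        intro S _
        by_cases h1 : u ∈ S
        · by_cases h2 : TransSet Pos (Cf σ) S
          · exfalso
            have := (h2.1 u h1).1
            simp only [hPosdef] at this
            exact hqu this
          · simp [h1, h2]
        · simp [h1]
      rw [Finset.sum_congr rfl fun σ _ => hzero σ, Finset.sum_const_zero]
      have : (T:ℝ) * p u = q u := by simp only [hqdef]
      rw [this, hq00]
  refine ⟨?_, w, hw0, hw1, hsupp, hmarg⟩
  have : ∃ S : Finset D, w S ≠ 0 := by
    by_contra hcon
    push_neg at hcon
    rw [Finset.sum_congr rfl (fun S _ => hcon S)] at hw1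
    simp at hw1
  obtain ⟨S, hS⟩ := this
  exact ⟨S, hsupp S hS⟩
end

section
/- Let d ≥ 1 and let q, Q be positive integers with q dividing Q. Let Ã, Ā ⊆ ℤ^d be finite sets such that Ã ⊆ Q·ℤ^d and Ā is q-block sparse modulo Q. Then the addition map (u, v) ↦ u + v from Ã × Ā to the sumset Ã + Ā is a bijection, and the sumset Ã + Ā is q-block sparse. -/
open scoped Pointwise

/-- `x` and `y` lie in one common `q`-block `b + {0,…,q−1}^d`, `b ∈ qℤ^d`. -/
def SameBlock (d q : ℕ) (x y : Fin d → ℤ) : Prop :=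
  ∃ b : Fin d → ℤ, (∀ i, (q : ℤ) ∣ b i) ∧
    (∀ i, b i ≤ x i ∧ x i < b i + q) ∧ (∀ i, b i ≤ y i ∧ y i < b i + q)

/-- `x` and `y` lie in one common `q`-block modulo `Q`,
i.e. in `b + {0,…,q−1}^d + Qℤ^d` for a common `b ∈ qℤ^d`. -/
def SameBlockMod (d q Q : ℕ) (x y : Fin d → ℤ) : Prop :=
  ∃ b : Fin d → ℤ, (∀ i, (q : ℤ) ∣ b i) ∧
    (∃ m : Fin d → ℤ, ∀ i, b i + Q * m i ≤ x i ∧ x i < b i + Q * m i + q) ∧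
    (∃ m : Fin d → ℤ, ∀ i, b i + Q * m i ≤ y i ∧ y i < b i + Q * m i + q)

/-- `A` meets each `q`-block in at most one point. -/
def BlockSparse (d q : ℕ) (A : Set (Fin d → ℤ)) : Prop :=
  ∀ x ∈ A, ∀ y ∈ A, SameBlock d q x y → x = y

/-- `A` meets each `q`-block modulo `Q` in at most one point. -/
def BlockSparseMod (d q Q : ℕ) (A : Set (Fin d → ℤ)) : Prop :=
  ∀ x ∈ A, ∀ y ∈ A, SameBlockMod d q Q x y → x = y

/-- If `Ã ⊆ Qℤ^d` and `Ā` is `q`-block sparse modulo `Q` (with `q ∣ Q`), then addition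
is a bijection from `Ã × Ā` onto the sumset `Ã + Ā`, and `Ã + Ā` is `q`-block sparse. -/
theorem residue_separated_addition (d q Q : ℕ) (hd : 1 ≤ d) (hq : 0 < q) (hQ : 0 < Q)
    (hdvd : q ∣ Q)
    (A₁ A₂ : Set (Fin d → ℤ)) (h₁fin : A₁.Finite) (h₂fin : A₂.Finite)
    (h₁ : ∀ x ∈ A₁, ∀ i, (Q : ℤ) ∣ x i) (h₂ : BlockSparseMod d q Q A₂) :
    Set.BijOn (fun uv : (Fin d → ℤ) × (Fin d → ℤ) => uv.1 + uv.2) (A₁ ×ˢ A₂) (A₁ + A₂) ∧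
      BlockSparse d q (A₁ + A₂) := by
  have hqQ : (q : ℤ) ≤ (Q : ℤ) := by exact_mod_cast Nat.le_of_dvd hQ hdvd
  have hqz : (0 : ℤ) < q := by exact_mod_cast hq
  have hdvdZ : (q : ℤ) ∣ (Q : ℤ) := by exact_mod_cast hdvd
  -- key: if v₁, v₂ ∈ A₂ and v₂ - v₁ is componentwise divisible by Q, then v₁ = v₂
  have key : ∀ v₁ ∈ A₂, ∀ v₂ ∈ A₂, (∀ i, (Q : ℤ) ∣ (v₂ i - v₁ i)) → v₁ = v₂ := by
    intro v₁ hv₁ v₂ hv₂ hdiff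
    refine h₂ v₁ hv₁ v₂ hv₂ ?_
    refine ⟨fun i => (q : ℤ) * (v₁ i / q), fun i => ⟨_, rfl⟩, ⟨0, fun i => ?_⟩,
      ⟨fun i => (v₂ i - v₁ i) / Q, fun i => ?_⟩⟩
    · have h1 := Int.emod_nonneg (v₁ i) (by positivity : (q:ℤ) ≠ 0)
      have h2 := Int.emod_lt_of_pos (v₁ i) hqz
      have h3 := Int.mul_ediv_add_emod (v₁ i) q
      constructor <;> simp only [Pi.zero_apply, mul_zero] <;> linarith
    · have hQk : (Q : ℤ) * ((v₂ i - v₁ i) / Q) = v₂ i - v₁ i :=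
        Int.mul_ediv_cancel' (hdiff i)
      have h1 := Int.emod_nonneg (v₁ i) (by positivity : (q:ℤ) ≠ 0)
      have h2 := Int.emod_lt_of_pos (v₁ i) hqz
      have h3 := Int.mul_ediv_add_emod (v₁ i) q
      constructor <;> simp only [Pi.zero_apply, mul_zero] <;> linarith
  constructor
  · refine ⟨fun uv huv => Set.add_mem_add huv.1 huv.2, ?_, ?_⟩
    · rintro ⟨u₁, v₁⟩ ⟨hu₁, hv₁⟩ ⟨u₂, v₂⟩ ⟨hu₂, hv₂⟩ heq
      simp only at heq
      have hveq : v₁ = v₂ := by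
        refine key v₁ hv₁ v₂ hv₂ fun i => ?_
        have : v₂ i - v₁ i = u₁ i - u₂ i := by
          have := congrFun heq i
          simp only [Pi.add_apply] at this
          linarith
        rw [this]
        exact dvd_sub (h₁ u₁ hu₁ i) (h₁ u₂ hu₂ i)
      subst hveq
      have : u₁ = u₂ := by
        funext i
        have := congrFun heq i
        simp only [Pi.add_apply] at this
        linarith
      simp [this]
    · rintro x hx
      rw [Set.mem_add] at hx
      obtain ⟨u, hu, v, hv, rfl⟩ := hx
      exact ⟨(u, v), ⟨hu, hv⟩, rfl⟩
  · rintro x hx y hy ⟨b, hb, hbx, hby⟩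
    rw [Set.mem_add] at hx hy
    obtain ⟨u₁, hu₁, v₁, hv₁, rfl⟩ := hx
    obtain ⟨u₂, hu₂, v₂, hv₂, rfl⟩ := hy
    have hveq : v₁ = v₂ := by
      refine h₂ v₁ hv₁ v₂ hv₂ ?_
      refine ⟨fun i => b i - u₁ i, fun i => dvd_sub (hb i) (dvd_trans hdvdZ (h₁ u₁ hu₁ i)),
        ⟨0, fun i => ?_⟩, ⟨fun i => (u₁ i - u₂ i) / Q, fun i => ?_⟩⟩
      · have h1 := (hbx i).1; have h2 := (hbx i).2
        simp only [Pi.add_apply] at h1 h2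
        constructor <;> simp only [Pi.zero_apply, mul_zero] <;> linarith
      · have hQk : (Q : ℤ) * ((u₁ i - u₂ i) / Q) = u₁ i - u₂ i :=
          Int.mul_ediv_cancel' (dvd_sub (h₁ u₁ hu₁ i) (h₁ u₂ hu₂ i))
        have h3 := (hby i).1; have h4 := (hby i).2
        simp only [Pi.add_apply] at h3 h4
        constructor <;> simp only [Pi.zero_apply, mul_zero] <;> linarith
    subst hveq
    have : u₁ = u₂ := by
      funext i
      have hqd : (q:ℤ) ∣ (u₁ i - u₂ i) := dvd_trans hdvdZ (dvd_sub (h₁ u₁ hu₁ i) (h₁ u₂ hu₂ i))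
      have h1 := (hbx i).1; have h2 := (hbx i).2; have h3 := (hby i).1; have h4 := (hby i).2
      simp only [Pi.add_apply] at h1 h2 h3 h4
      have habs : |u₁ i - u₂ i| < (q:ℤ) := by
        rw [abs_lt]; constructor <;> linarith
      have := Int.eq_zero_of_abs_lt_dvd hqd habs
      linarith
    simp [this]
end
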